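/- arXiv:2401.16153 — 6 statements merged into one kernel-verified Lean document; each statement's English description precedes it below -/
import Mathlib

section
/- For fixed ξ > 0 and p > 3, the function u(t) = (|t+ξ|^{p-1}·sign(t+ξ) + |t-ξ|^{p-1}·sign(t-ξ))/t is monotone increasing on (0, ∞). -/
/-!
With `q = p - 2` the numerator is `g t = φ (t + ξ) + φ (t - ξ)` for the odd function
`φ s = |s| ^ q * s`, so `g 0 = 0` and `u t` is the slope of `g` between `0` and `t`.
Since `g' t = (q + 1) (|t + ξ| ^ q + |t - ξ| ^ q)` is even and convex, it increases on `[0, ∞)`;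
hence `g` is convex there and its slopes from `0` increase.
-/

open Real Set

lemma abs_rpow_add_one_mul_sign (r s : ℝ) : |s| ^ (r + 1) * Real.sign s = |s| ^ r * s := by
  rcases lt_trichotomy s 0 with hs | rfl | hs
  · rw [rpow_add_one (abs_ne_zero.mpr hs.ne), sign_of_neg hs, abs_of_neg hs]
    ring
  · simp
  · rw [rpow_add_one (abs_ne_zero.mpr hs.ne'), sign_of_pos hs, abs_of_pos hs]
    ring

lemma hasDerivAt_abs_rpow_mul_self {q : ℝ} (hq : 1 < q) (s : ℝ) :
    HasDerivAt (fun s : ℝ => |s| ^ q * s) ((q + 1) * |s| ^ q) s := by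
  have hsq : |s| ^ (q - 2) * s * s = |s| ^ q := by
    rcases eq_or_ne s 0 with rfl | hs
    · simp [zero_rpow (by linarith : q ≠ 0)]
    · rw [mul_assoc, ← sq, ← sq_abs, ← rpow_natCast, ← rpow_add (abs_pos.mpr hs)]
      norm_num
  refine ((hasDerivAt_abs_rpow s hq).mul (hasDerivAt_id s)).congr_deriv ?_
  rw [id_eq, mul_one, mul_assoc q, mul_assoc q, hsq]
  ring

lemma convexOn_univ_abs_rpow {q : ℝ} (hq : 1 ≤ q) : ConvexOn ℝ univ fun x : ℝ => |x| ^ q := by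
  have himage : (norm : ℝ → ℝ) '' univ = Ici 0 := by rw [image_univ, range_norm]
  have hconv := convexOn_rpow hq
  have hmono := monotoneOn_rpow_Ici_of_exponent_nonneg (zero_le_one.trans hq)
  rw [← himage] at hconv hmono
  exact hconv.comp convexOn_univ_norm hmono

lemma ConvexOn.monotoneOn_Ici_of_even {f : ℝ → ℝ} (hf : ConvexOn ℝ univ f) (he : f.Even) :
    MonotoneOn f (Ici 0) := by
  intro x hx y _ hxy
  have hmem : x ∈ segment ℝ (-y) y := by
    rw [segment_eq_Icc (by linarith [mem_Ici.mp hx])]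
    exact ⟨by linarith [mem_Ici.mp hx], hxy⟩
  simpa [he y] using hf.le_on_segment (mem_univ _) (mem_univ _) hmem

lemma convexOn_Ici_abs_rpow_mul_add_sub {q : ℝ} (hq : 1 < q) (ξ : ℝ) :
    ConvexOn ℝ (Ici 0) fun t : ℝ => |t + ξ| ^ q * (t + ξ) + |t - ξ| ^ q * (t - ξ) := by
  have hderiv (t : ℝ) : HasDerivAt (fun t : ℝ => |t + ξ| ^ q * (t + ξ) + |t - ξ| ^ q * (t - ξ))
      ((q + 1) * (|t + ξ| ^ q + |t - ξ| ^ q)) t := by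
    refine (((hasDerivAt_abs_rpow_mul_self hq (t + ξ)).comp t ((hasDerivAt_id t).add_const ξ)).add
      ((hasDerivAt_abs_rpow_mul_self hq (t - ξ)).comp t
        ((hasDerivAt_id t).sub_const ξ))).congr_deriv ?_
    ring
  have hdiff : Differentiable ℝ fun t : ℝ => |t + ξ| ^ q * (t + ξ) + |t - ξ| ^ q * (t - ξ) :=
    fun t => (hderiv t).differentiableAt
  have hconv : ConvexOn ℝ univ fun t : ℝ => |t + ξ| ^ q + |t - ξ| ^ q := by
    simpa only [Function.comp_def, Pi.add_def, ← sub_eq_add_neg, preimage_univ] using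
      ((convexOn_univ_abs_rpow hq.le).translate_left ξ).add
      ((convexOn_univ_abs_rpow hq.le).translate_left (-ξ))
  have hmono := hconv.monotoneOn_Ici_of_even fun t => by
    dsimp only
    rw [show -t + ξ = -(t - ξ) by ring, show -t - ξ = -(t + ξ) by ring, abs_neg, abs_neg, add_comm]
  refine MonotoneOn.convexOn_of_deriv (convex_Ici 0) hdiff.continuous.continuousOn
    hdiff.differentiableOn ?_
  rw [funext fun t => (hderiv t).deriv]
  exact fun x hx y hy hxy => mul_le_mul_of_nonneg_left
    (hmono (interior_subset hx) (interior_subset hy) hxy) (by linarith)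

theorem stmt_0_general (ξ p : ℝ) (hp : 3 < p) :
    MonotoneOn
      (fun t : ℝ =>
        (|t + ξ| ^ (p - 1) * Real.sign (t + ξ) +
          |t - ξ| ^ (p - 1) * Real.sign (t - ξ)) / t)
      (Set.Ioi (0 : ℝ)) := by
  have hq : 1 < p - 2 := by linarith
  have hsign (s : ℝ) : |s| ^ (p - 1) * Real.sign s = |s| ^ (p - 2) * s := by
    rw [show p - 1 = p - 2 + 1 by ring, abs_rpow_add_one_mul_sign]
  refine ((convexOn_Ici_abs_rpow_mul_add_sub hq ξ).slope_mono self_mem_Ici).mono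
    (fun t ht => ⟨le_of_lt ht, ne_of_gt ht⟩) |>.congr fun t _ => ?_
  simp [slope_def_field, hsign]

/-- For fixed `ξ > 0` and `p > 3`, the function
`u(t) = (|t+ξ|^(p-1) sign(t+ξ) + |t-ξ|^(p-1) sign(t-ξ)) / t`
is monotone increasing on `(0, ∞)`. -/
theorem stmt_0 (ξ p : ℝ) (hξ : 0 < ξ) (hp : 3 < p) :
    MonotoneOn
      (fun t : ℝ =>
        (|t + ξ| ^ (p - 1) * Real.sign (t + ξ) +
          |t - ξ| ^ (p - 1) * Real.sign (t - ξ)) / t)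
      (Set.Ioi (0 : ℝ)) :=
  stmt_0_general ξ p hp
end

section
/- For fixed ξ > 0 and p > 3, the numerator function N(t) = |t+ξ|^{p-2}((p-2)t - ξ) + |t-ξ|^{p-2}((p-2)t + ξ) is nonnegative for all t ≥ 0. -/
/-!
Write `q = p - 2 > 1`. If `q t ≥ ξ` both terms of `N(t)` are nonnegative. Otherwise `t < ξ`, and on
`[0, ξ]` the numerator is `g(s) = (ξ + s)^q (q s - ξ) + (ξ - s)^q (q s + ξ)`, with `g(0) = 0` and
`g'(s) = q (q + 1) s ((ξ + s)^(q-1) - (ξ - s)^(q-1)) ≥ 0`, so `g` is nonnegative on `[0, ξ]`.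
-/

open Set

noncomputable section

/-- `N(s)` with `q = p - 2`, written without absolute values (valid for `|s| ≤ ξ`). -/
def numeratorOn (ξ q s : ℝ) : ℝ :=
  (s + ξ) ^ q * (q * s - ξ) + (ξ - s) ^ q * (q * s + ξ)

variable {ξ q : ℝ}

lemma numeratorOn_zero : numeratorOn ξ q 0 = 0 := by
  simp [numeratorOn]

lemma continuous_numeratorOn (hq : 0 ≤ q) : Continuous (numeratorOn ξ q) := by
  have hpow := Real.continuous_rpow_const hq
  unfold numeratorOn
  fun_prop

lemma hasDerivAt_numeratorOn {s : ℝ} (hs : |s| < ξ) :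
    HasDerivAt (numeratorOn ξ q) (q * (q + 1) * s * ((s + ξ) ^ (q - 1) - (ξ - s) ^ (q - 1))) s := by
  obtain ⟨hs₁, hs₂⟩ := abs_lt.1 hs
  have hplus : 0 < s + ξ := by linarith
  have hminus : 0 < ξ - s := by linarith
  have hA := ((hasDerivAt_id s).add_const ξ).rpow_const (p := q) (Or.inl hplus.ne')
  have hB := ((hasDerivAt_id s).const_sub ξ).rpow_const (p := q) (Or.inl hminus.ne')
  have hL := ((hasDerivAt_id s).const_mul q).sub_const ξ
  have hM := ((hasDerivAt_id s).const_mul q).add_const ξ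
  refine ((hA.mul hL).add (hB.mul hM)).congr_deriv ?_
  simp only [id]
  rw [Real.rpow_sub_one hplus.ne', Real.rpow_sub_one hminus.ne']
  field_simp
  ring

lemma monotoneOn_numeratorOn (hq : 1 ≤ q) : MonotoneOn (numeratorOn ξ q) (Icc 0 ξ) := by
  refine monotoneOn_of_hasDerivWithinAt_nonneg (convex_Icc 0 ξ)
    (f' := fun s => q * (q + 1) * s * ((s + ξ) ^ (q - 1) - (ξ - s) ^ (q - 1)))
    (continuous_numeratorOn (by linarith)).continuousOn (fun s hs => ?_) (fun s hs => ?_)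
  all_goals
    rw [interior_Icc] at hs
    obtain ⟨hs₀, hsξ⟩ := hs
  · exact (hasDerivAt_numeratorOn (abs_lt.2 ⟨by linarith, hsξ⟩)).hasDerivWithinAt
  · have hbase : (ξ - s) ^ (q - 1) ≤ (s + ξ) ^ (q - 1) :=
      Real.rpow_le_rpow (by linarith) (by linarith) (by linarith)
    have : 0 ≤ q * (q + 1) * s := by positivity
    exact mul_nonneg this (sub_nonneg.2 hbase)

lemma numeratorOn_nonneg (hq : 1 ≤ q) {s : ℝ} (hs₀ : 0 ≤ s) (hsξ : s ≤ ξ) :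
    0 ≤ numeratorOn ξ q s :=
  numeratorOn_zero (ξ := ξ) (q := q) ▸
    monotoneOn_numeratorOn hq (left_mem_Icc.2 (hs₀.trans hsξ)) ⟨hs₀, hsξ⟩ hs₀

end

/-- For fixed `ξ > 0` and `p > 3`, the numerator
`N(t) = |t+ξ|^(p-2)((p-2)t - ξ) + |t-ξ|^(p-2)((p-2)t + ξ)` is nonnegative for `t ≥ 0`. -/
theorem stmt_1 (ξ p : ℝ) (hξ : 0 < ξ) (hp : 3 < p) (t : ℝ) (ht : 0 ≤ t) :
    0 ≤ |t + ξ| ^ (p - 2) * ((p - 2) * t - ξ) +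
        |t - ξ| ^ (p - 2) * ((p - 2) * t + ξ) := by
  rcases le_or_gt ξ ((p - 2) * t) with hlarge | hsmall
  · have hplus : 0 ≤ (p - 2) * t + ξ := by linarith
    have hminus : 0 ≤ (p - 2) * t - ξ := by linarith
    positivity
  · have htξ : t ≤ ξ := by nlinarith
    have h := numeratorOn_nonneg (ξ := ξ) (q := p - 2) (by linarith) ht htξ
    rwa [numeratorOn, ← abs_of_nonneg (by linarith : 0 ≤ t + ξ),
      ← abs_of_nonneg (by linarith : 0 ≤ ξ - t), abs_sub_comm ξ t] at h
end

section
/- Let p > 3 and ξ ∈ ℝ be fixed, and r > 0. Among all real coefficient sequences (a_1, …, a_n) with Σ_{k=1}^n a_k² = r², the quantity E[|ξ + Σ_{k=1}^n a_k r_k|^p]^{1/p}, where r_k are independent Rademacher (±1 with probability 1/2 each) random variables, attains its maximum exactly when |a_k| = r/√n for every k. -/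
/-!
For fixed `s` and `p > 3`, `χ t = |s + √t| ^ p + |s - √t| ^ p` is strictly convex on `[0, ∞)`:
its derivative is half the secant slope from `0` of `∂ₓ (|s + x| ^ p + |s - x| ^ p)`, which is
strictly convex because its own derivative `p (p - 1) (|s + x| ^ (p - 2) + |s - x| ^ (p - 2))` is
strictly increasing on `[0, ∞)`. Averaging over the signs at two coordinates `i ≠ j`, the moment
becomes a sum of terms `χ ((x + y) ^ 2) + χ ((x - y) ^ 2)` with `|x| = |a i|`, `|y| = |a j|`;
replacing `a i` and `a j` by their quadratic mean turns each term into
`χ 0 + χ ((x + y) ^ 2 + (x - y) ^ 2)`, which is strictly larger when `|a i| ≠ |a j|`. Hence a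
maximiser on the compact sphere has all `|a k|` equal, and the moment depends only on the `|a k|`.
-/

open Set Real

lemma strictConvexOn_abs_rpow {r : ℝ} (hr : 1 < r) :
    StrictConvexOn ℝ univ fun y : ℝ => |y| ^ r := by
  refine ⟨convex_univ, fun x _ y _ hxy a b ha hb hab => ?_⟩
  simp only [smul_eq_mul]
  have htri : |a * x + b * y| ≤ a * |x| + b * |y| :=
    (abs_add_le _ _).trans_eq (by rw [abs_mul, abs_mul, abs_of_pos ha, abs_of_pos hb])
  rcases eq_or_ne |x| |y| with hxy' | hxy'
  · -- here `x = -y ≠ 0`, and the triangle inequality is strict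
    obtain rfl : x = -y := (abs_eq_abs.mp hxy').resolve_left hxy
    have hy : 0 < |y| := abs_pos.mpr fun h => hxy (by simp [h])
    have hlt : |a * -y + b * y| < a * |-y| + b * |y| := by
      rw [show a * -y + b * y = (b - a) * y by ring, abs_mul, abs_neg, ← add_mul]
      exact mul_lt_mul_of_pos_right (abs_sub_lt_iff.mpr ⟨by linarith, by linarith⟩) hy
    calc |a * -y + b * y| ^ r < (a * |-y| + b * |y|) ^ r :=
          rpow_lt_rpow (abs_nonneg _) hlt (by linarith)
      _ = a * |-y| ^ r + b * |y| ^ r := by rw [abs_neg, ← add_mul, ← add_mul, hab, one_mul, one_mul]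
  · calc |a * x + b * y| ^ r ≤ (a * |x| + b * |y|) ^ r :=
          rpow_le_rpow (abs_nonneg _) htri (by linarith)
      _ < a * |x| ^ r + b * |y| ^ r :=
          (strictConvexOn_rpow hr).2 (abs_nonneg x) (abs_nonneg y) hxy' ha hb hab

lemma StrictConvexOn.strictMonoOn_Ici_of_even {f : ℝ → ℝ} (hf : StrictConvexOn ℝ univ f)
    (heven : ∀ x, f (-x) = f x) : StrictMonoOn f (Ici 0) := by
  intro x hx y _ hxy
  have hy : 0 < y := lt_of_le_of_lt hx hxy
  have hmem : x ∈ openSegment ℝ (-y) y := by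
    rw [openSegment_eq_Ioo (by linarith)]
    exact ⟨by linarith [mem_Ici.mp hx], hxy⟩
  simpa [heven, max_self] using hf.lt_on_openSegment (mem_univ _) (mem_univ _) (by linarith) hmem

lemma StrictConvexOn.add_lt_map_zero_add_map_add {f : ℝ → ℝ} (hf : StrictConvexOn ℝ (Ici 0) f)
    {a b : ℝ} (ha : 0 < a) (hb : 0 < b) : f a + f b < f 0 + f (a + b) := by
  have hab : 0 < a + b := by positivity
  have hne : (0 : ℝ) ≠ a + b := hab.ne
  have key : ∀ {u v : ℝ}, 0 < u → 0 < v → u + v = a + b →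
      f u < v / (a + b) * f 0 + u / (a + b) * f (a + b) := fun {u v} hu hv huv => by
    have := hf.2 (mem_Ici.mpr le_rfl) hab.le hne (div_pos hv hab) (div_pos hu hab)
      (by rw [← add_div, add_comm, huv, div_self hab.ne'])
    simp only [smul_eq_mul, mul_zero, zero_add] at this
    rwa [div_mul_cancel₀ _ hab.ne'] at this
  have h1 := key ha hb rfl
  have h2 := key hb ha (add_comm b a)
  have hsum : a / (a + b) + b / (a + b) = 1 := by rw [← add_div, div_self hab.ne']
  linear_combination h1 + h2 + (f 0 + f (a + b)) * hsum

lemma abs_rpow_sub_two_mul_sq {c : ℝ} (hc : c ≠ 0) (y : ℝ) : |y| ^ (c - 2) * y ^ 2 = |y| ^ c := by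
  rcases eq_or_ne y 0 with rfl | hy
  · simp [zero_rpow hc]
  · rw [← sq_abs, ← rpow_two, ← rpow_add (abs_pos.mpr hy), sub_add_cancel]

lemma hasDerivAt_abs_rpow_mul_self_s4 {c : ℝ} (hc : 1 < c) (y : ℝ) :
    HasDerivAt (fun z : ℝ => |z| ^ c * z) ((c + 1) * |y| ^ c) y := by
  refine ((hasDerivAt_abs_rpow y hc).mul (hasDerivAt_id' y)).congr_deriv ?_
  rw [mul_one, mul_assoc, mul_assoc, ← sq, abs_rpow_sub_two_mul_sq (by linarith)]
  ring

lemma StrictConvexOn.comp_sqrt {f : ℝ → ℝ} (hf : Differentiable ℝ f) (h0 : deriv f 0 = 0)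
    (hf' : StrictConvexOn ℝ (Ici 0) (deriv f)) : StrictConvexOn ℝ (Ici 0) fun t => f √t := by
  -- the derivative `f' √t / (2 √t)` is half the slope of the secant of `f'` from `0` to `√t`
  have hderiv : ∀ t : ℝ, 0 < t → deriv (fun t => f √t) t = deriv f √t / √t / 2 := fun t ht => by
    rw [show (fun t => f √t) = f ∘ sqrt from rfl,
      ((hf √t).hasDerivAt.comp t (hasDerivAt_sqrt ht.ne')).deriv]
    field_simp
  refine StrictMonoOn.strictConvexOn_of_deriv (convex_Ici 0)
    (hf.continuous.comp continuous_sqrt).continuousOn ?_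
  rw [interior_Ici]
  intro t ht u hu htu
  rw [hderiv t ht, hderiv u hu]
  have hslope := hf'.secant_strict_mono (mem_Ici.mpr le_rfl) (sqrt_nonneg t) (sqrt_nonneg u)
    (sqrt_pos.2 ht).ne' (sqrt_pos.2 hu).ne' (sqrt_lt_sqrt (le_of_lt ht) htu)
  simp only [h0, sub_zero] at hslope
  exact div_lt_div_of_pos_right hslope two_pos

noncomputable def symmAbsRpow (p s w : ℝ) : ℝ := |s + w| ^ p + |s - w| ^ p

lemma symmAbsRpow_neg (p s w : ℝ) : symmAbsRpow p s (-w) = symmAbsRpow p s w := by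
  rw [symmAbsRpow, symmAbsRpow, ← sub_eq_add_neg, sub_neg_eq_add, add_comm]

lemma symmAbsRpow_sqrt_sq (p s w : ℝ) : symmAbsRpow p s √(w ^ 2) = symmAbsRpow p s w := by
  rw [sqrt_sq_eq_abs]
  rcases abs_choice w with h | h <;> rw [h]
  exact symmAbsRpow_neg p s w

lemma strictMonoOn_symmAbsRpow {p : ℝ} (hp : 1 < p) (s : ℝ) :
    StrictMonoOn (symmAbsRpow p s) (Ici 0) := by
  refine StrictConvexOn.strictMonoOn_Ici_of_even ?_ (symmAbsRpow_neg p s)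
  have h := strictConvexOn_abs_rpow hp
  refine ((h.translate_right s).add (h.translate_right (-s))).congr fun w _ => ?_
  simp [symmAbsRpow, abs_sub_comm s w, neg_add_eq_sub]

lemma hasDerivAt_symmAbsRpow {p : ℝ} (hp : 1 < p) (s x : ℝ) :
    HasDerivAt (symmAbsRpow p s)
      (p * (|s + x| ^ (p - 2) * (s + x) - |s - x| ^ (p - 2) * (s - x))) x := by
  refine (((hasDerivAt_abs_rpow (s + x) hp).comp x ((hasDerivAt_id' x).const_add s)).add
    ((hasDerivAt_abs_rpow (s - x) hp).comp x ((hasDerivAt_id' x).const_sub s))).congr_deriv ?_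
  ring

lemma strictConvexOn_deriv_symmAbsRpow {p : ℝ} (hp : 3 < p) (s : ℝ) :
    StrictConvexOn ℝ (Ici 0) (deriv (symmAbsRpow p s)) := by
  have hderiv : deriv (symmAbsRpow p s) =
      fun x => p * (|s + x| ^ (p - 2) * (s + x) - |s - x| ^ (p - 2) * (s - x)) :=
    funext fun x => (hasDerivAt_symmAbsRpow (by linarith) s x).deriv
  have hderiv2 : ∀ x, HasDerivAt (deriv (symmAbsRpow p s))
      (p * ((p - 1) * symmAbsRpow (p - 2) s x)) x := fun x => by
    rw [hderiv]
    refine ((((hasDerivAt_abs_rpow_mul_self_s4 (by linarith) (s + x)).comp x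
      ((hasDerivAt_id' x).const_add s)).sub ((hasDerivAt_abs_rpow_mul_self_s4 (by linarith)
        (s - x)).comp x ((hasDerivAt_id' x).const_sub s))).const_mul p).congr_deriv ?_
    rw [symmAbsRpow]
    ring
  refine StrictMonoOn.strictConvexOn_of_deriv (convex_Ici 0)
    (continuous_iff_continuousAt.2 fun x => (hderiv2 x).continuousAt).continuousOn ?_
  rw [interior_Ici, funext fun x => (hderiv2 x).deriv]
  intro x hx y hy hxy
  have hmono := strictMonoOn_symmAbsRpow (by linarith : 1 < p - 2) s
    (mem_Ici.2 (le_of_lt hx)) (mem_Ici.2 (le_of_lt hy)) hxy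
  simp only [← mul_assoc]
  exact mul_lt_mul_of_pos_left hmono (by nlinarith)

lemma strictConvexOn_symmAbsRpow_sqrt {p : ℝ} (hp : 3 < p) (s : ℝ) :
    StrictConvexOn ℝ (Ici 0) fun t => symmAbsRpow p s √t :=
  StrictConvexOn.comp_sqrt (fun x => (hasDerivAt_symmAbsRpow (by linarith) s x).differentiableAt)
    (by simp [(hasDerivAt_symmAbsRpow (by linarith) s 0).deriv])
    (strictConvexOn_deriv_symmAbsRpow hp s)

lemma symmAbsRpow_add_symmAbsRpow_sub_lt {p : ℝ} (hp : 3 < p) (s : ℝ) {x y u v : ℝ}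
    (hxy : |x| ≠ |y|) (huv : |u| = |v|) (h : u ^ 2 + v ^ 2 = x ^ 2 + y ^ 2) :
    symmAbsRpow p s (x + y) + symmAbsRpow p s (x - y)
      < symmAbsRpow p s (u + v) + symmAbsRpow p s (u - v) := by
  rw [← symmAbsRpow_sqrt_sq p s (x + y), ← symmAbsRpow_sqrt_sq p s (x - y),
    ← symmAbsRpow_sqrt_sq p s (u + v), ← symmAbsRpow_sqrt_sq p s (u - v)]
  have hadd : x + y ≠ 0 := fun h0 => hxy (by rw [eq_neg_of_add_eq_zero_left h0, abs_neg])
  have hsub : x - y ≠ 0 := sub_ne_zero_of_ne fun h0 => hxy (congrArg abs h0)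
  have hlt := (strictConvexOn_symmAbsRpow_sqrt hp s).add_lt_map_zero_add_map_add
    (pow_two_pos_of_ne_zero hadd) (pow_two_pos_of_ne_zero hsub)
  have hsum : (u + v) ^ 2 + (u - v) ^ 2 = (x + y) ^ 2 + (x - y) ^ 2 := by
    linear_combination 2 * h
  have hsq : u ^ 2 = v ^ 2 := by rw [← sq_abs u, huv, sq_abs]
  -- `|u| = |v|` means that one of `u + v`, `u - v` vanishes
  have hprod : (u + v) ^ 2 * (u - v) ^ 2 = 0 := by linear_combination (u ^ 2 - v ^ 2) * hsq
  rcases mul_eq_zero.mp hprod with h0 | h0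
  · rw [h0, zero_add] at hsum
    rwa [h0, hsum]
  · rw [h0, add_zero] at hsum
    rwa [h0, hsum, add_comm _ (symmAbsRpow p s √0)]

section FlipAt

variable {ι : Type*} [DecidableEq ι]

def flipAt (i : ι) (ε : ι → Bool) : ι → Bool := Function.update ε i (!ε i)

lemma flipAt_involutive (i : ι) : Function.Involutive (flipAt i) := fun ε => by
  simp [flipAt]

lemma flipAt_apply_of_ne {i k : ι} (h : k ≠ i) (ε : ι → Bool) : flipAt i ε k = ε k :=
  Function.update_of_ne h _ _

end FlipAt

lemma abs_ite_one_neg_one (b : Bool) : |(if b then (1 : ℝ) else -1)| = 1 := by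
  cases b <;> simp

lemma sq_mul_ite_one_neg_one (x : ℝ) (b : Bool) : (x * if b then (1 : ℝ) else -1) ^ 2 = x ^ 2 := by
  rw [mul_pow, ← sq_abs (ite _ _ _), abs_ite_one_neg_one, one_pow, mul_one]

section RademacherSums

variable {ι : Type*} [Fintype ι]

def signedSum (a : ι → ℝ) (ε : ι → Bool) : ℝ := ∑ k, a k * if ε k then 1 else -1

lemma isCompact_setOf_sum_sq_eq (R : ℝ) : IsCompact {b : ι → ℝ | ∑ k, b k ^ 2 = R} := by
  refine (isCompact_univ_pi fun _ => isCompact_Icc (a := -√R) (b := √R)).of_isClosed_subset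
    (isClosed_eq (by fun_prop) continuous_const) fun b hb k _ => abs_le.mp (abs_le_sqrt ?_)
  exact hb ▸ Finset.single_le_sum (fun k _ => sq_nonneg (b k)) (Finset.mem_univ k)

lemma abs_eq_of_sum_sq_eq {c : ℝ} (hc : 0 ≤ c) {a : ι → ℝ}
    (ha : ∑ k, a k ^ 2 = Fintype.card ι * c ^ 2) (h : ∀ i j, |a i| = |a j|) (k : ι) :
    |a k| = c := by
  have hsum : ∑ i, a i ^ 2 = Fintype.card ι * |a k| ^ 2 := by
    simp_rw [← sq_abs (a _), h _ k, Finset.sum_const, Finset.card_univ, nsmul_eq_mul]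
  have hcard : (0 : ℝ) < Fintype.card ι := Nat.cast_pos.mpr (Fintype.card_pos_iff.mpr ⟨k⟩)
  rw [hsum] at ha
  exact (pow_left_inj₀ (abs_nonneg _) hc two_ne_zero).mp (mul_left_cancel₀ hcard.ne' ha)

variable [DecidableEq ι]

-- `2 ^ card ι` times the `p`-th moment of `ξ + ∑ k, a k r k` for independent Rademacher `r k`
noncomputable def rademacherMoment (p ξ : ℝ) (a : ι → ℝ) : ℝ :=
  ∑ ε : ι → Bool, |ξ + signedSum a ε| ^ p

lemma sum_apply_update_eq {α : Type*} (g : ι → α → ℝ) (a : ι → α) (i : ι) (v : α) :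
    ∑ k, g k (Function.update a i v k) = ∑ k, g k (a k) + (g i v - g i (a i)) := by
  rw [← Finset.add_sum_erase _ _ (Finset.mem_univ i),
    ← Finset.add_sum_erase _ (fun k => g k (a k)) (Finset.mem_univ i), Function.update_self,
    Finset.sum_congr rfl fun k hk => by rw [Function.update_of_ne (Finset.ne_of_mem_erase hk)]]
  ring

lemma sum_flipAt (f : (ι → Bool) → ℝ) (i : ι) : ∑ ε, f (flipAt i ε) = ∑ ε, f ε :=
  Equiv.sum_comp (flipAt_involutive i).toPerm f

lemma four_mul_sum_eq_sum_flipAt (f : (ι → Bool) → ℝ) (i j : ι) :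
    4 * ∑ ε, f ε =
      ∑ ε, (f ε + f (flipAt i ε) + f (flipAt j ε) + f (flipAt i (flipAt j ε))) := by
  rw [Finset.sum_add_distrib, Finset.sum_add_distrib, Finset.sum_add_distrib, sum_flipAt,
    sum_flipAt, sum_flipAt (fun ε => f (flipAt i ε)), sum_flipAt]
  ring

lemma signedSum_flipAt (a : ι → ℝ) (ε : ι → Bool) (i : ι) :
    signedSum a (flipAt i ε) = signedSum a ε - 2 * (a i * if ε i then 1 else -1) := by
  refine (sum_apply_update_eq (fun k b => a k * if b then 1 else -1) ε i (!ε i)).trans ?_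
  rw [signedSum]
  cases ε i <;> simp <;> ring

lemma signedSum_update (a : ι → ℝ) (ε : ι → Bool) (i : ι) (v : ℝ) :
    signedSum (Function.update a i v) ε =
      signedSum a ε + (v - a i) * if ε i then 1 else -1 := by
  refine (sum_apply_update_eq (fun k t => t * if ε k then 1 else -1) a i v).trans ?_
  rw [signedSum]
  ring

lemma abs_rpow_add_flipAt_eq {p ξ : ℝ} {i j : ι} (hij : i ≠ j) (a : ι → ℝ) (ε : ι → Bool)
    {R x y : ℝ} (hx : (a i * if ε i then 1 else -1) = x) (hy : (a j * if ε j then 1 else -1) = y)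
    (hR : ξ + signedSum a ε = R + (x + y)) :
    |ξ + signedSum a ε| ^ p + |ξ + signedSum a (flipAt i ε)| ^ p
        + |ξ + signedSum a (flipAt j ε)| ^ p + |ξ + signedSum a (flipAt i (flipAt j ε))| ^ p
      = symmAbsRpow p R (x + y) + symmAbsRpow p R (x - y) := by
  have hi : ξ + signedSum a (flipAt i ε) = R - (x - y) := by
    rw [signedSum_flipAt, hx]; linarith
  have hj : ξ + signedSum a (flipAt j ε) = R + (x - y) := by
    rw [signedSum_flipAt, hy]; linarith
  have hij' : ξ + signedSum a (flipAt i (flipAt j ε)) = R - (x + y) := by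
    rw [signedSum_flipAt, signedSum_flipAt, flipAt_apply_of_ne hij, hx, hy]; linarith
  rw [hR, hi, hj, hij', symmAbsRpow, symmAbsRpow]
  ring

lemma exists_sum_sq_eq_rademacherMoment_lt {p : ℝ} (hp : 3 < p) (ξ : ℝ) {a : ι → ℝ} {i j : ι}
    (hij : |a i| ≠ |a j|) :
    ∃ b : ι → ℝ, ∑ k, b k ^ 2 = ∑ k, a k ^ 2 ∧ rademacherMoment p ξ a < rademacherMoment p ξ b := by
  have hne : i ≠ j := by rintro rfl; exact hij rfl
  set c := √((a i ^ 2 + a j ^ 2) / 2)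
  have hc : c ^ 2 = (a i ^ 2 + a j ^ 2) / 2 := sq_sqrt (by positivity)
  set b := Function.update (Function.update a i c) j c
  have hbi : b i = c := by simp [b, Function.update_of_ne hne]
  have hbj : b j = c := Function.update_self _ _ _
  refine ⟨b, ?_, ?_⟩
  · rw [sum_apply_update_eq (fun _ t => t ^ 2), sum_apply_update_eq (fun _ t => t ^ 2),
      Function.update_of_ne hne.symm]
    linarith
  rw [← mul_lt_mul_iff_right₀ (four_pos : (0 : ℝ) < 4), rademacherMoment, rademacherMoment,
    four_mul_sum_eq_sum_flipAt _ i j, four_mul_sum_eq_sum_flipAt _ i j]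
  refine Finset.sum_lt_sum_of_nonempty Finset.univ_nonempty fun ε _ => ?_
  set R := ξ + signedSum a ε - (a i * if ε i then 1 else -1) - (a j * if ε j then 1 else -1)
  -- smoothing leaves the part of the sum off `{i, j}` unchanged
  have hRb : ξ + signedSum b ε =
      R + ((b i * if ε i then 1 else -1) + (b j * if ε j then 1 else -1)) := by
    rw [signedSum_update, signedSum_update, Function.update_of_ne hne.symm, hbi, hbj]
    ring
  rw [abs_rpow_add_flipAt_eq hne a ε rfl rfl (R := R) (by ring),
    abs_rpow_add_flipAt_eq hne b ε rfl rfl hRb]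
  apply symmAbsRpow_add_symmAbsRpow_sub_lt hp
  · simpa only [abs_mul, abs_ite_one_neg_one, mul_one] using hij
  · simp only [abs_mul, abs_ite_one_neg_one, hbi, hbj]
  · simp only [sq_mul_ite_one_neg_one, hbi, hbj]
    linarith

lemma rademacherMoment_nonneg (p ξ : ℝ) (a : ι → ℝ) : 0 ≤ rademacherMoment p ξ a :=
  Finset.sum_nonneg fun _ _ => rpow_nonneg (abs_nonneg _) _

lemma continuous_rademacherMoment {p : ℝ} (hp : 0 ≤ p) (ξ : ℝ) :
    Continuous (rademacherMoment (ι := ι) p ξ) :=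
  continuous_finsetSum _ fun _ _ => (continuous_const.add (continuous_finsetSum _
    fun k _ => (continuous_apply k).mul continuous_const)).abs.rpow_const fun _ => Or.inr hp

lemma rademacherMoment_congr_abs {p ξ : ℝ} {a b : ι → ℝ} (h : ∀ k, |a k| = |b k|) :
    rademacherMoment p ξ a = rademacherMoment p ξ b := by
  -- flip the signs at the coordinates where `a` and `b` differ
  let σ : (ι → Bool) → ι → Bool := fun ε k => if a k = b k then ε k else !ε k
  have hσ : Function.Involutive σ := fun ε => funext fun k => by
    by_cases hk : a k = b k <;> simp [σ, hk]
  rw [rademacherMoment, ← Equiv.sum_comp hσ.toPerm, Function.Involutive.coe_toPerm]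
  refine Finset.sum_congr rfl fun ε _ => ?_
  congr 3
  refine Finset.sum_congr rfl fun k _ => ?_
  by_cases hk : a k = b k
  · simp [σ, hk]
  · have hσk : σ ε k = !ε k := if_neg hk
    rw [hσk, (abs_eq_abs.mp (h k)).resolve_left hk]
    cases ε k <;> simp

theorem rademacherMoment_le_const_and_eq_iff {p : ℝ} (hp : 3 < p) (ξ : ℝ) {c : ℝ} (hc : 0 ≤ c)
    {a : ι → ℝ} (ha : ∑ k, a k ^ 2 = Fintype.card ι * c ^ 2) :
    rademacherMoment p ξ a ≤ rademacherMoment p ξ (fun _ : ι => c) ∧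
      (rademacherMoment p ξ a = rademacherMoment p ξ (fun _ : ι => c) ↔ ∀ k, |a k| = c) := by
  obtain ⟨m, hm, hmax⟩ := (isCompact_setOf_sum_sq_eq _).exists_isMaxOn ⟨a, ha⟩
    (continuous_rademacherMoment (p := p) (by linarith) ξ).continuousOn
  have hbetter : ∀ b : ι → ℝ, ∑ k, b k ^ 2 = Fintype.card ι * c ^ 2 → (∃ k, |b k| ≠ c) →
      rademacherMoment p ξ b < rademacherMoment p ξ m := by
    rintro b hb ⟨k, hk⟩
    obtain ⟨i, j, hij⟩ : ∃ i j, |b i| ≠ |b j| := by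
      by_contra! h
      exact hk (abs_eq_of_sum_sq_eq hc hb h k)
    obtain ⟨b', hb', hlt⟩ := exists_sum_sq_eq_rademacherMoment_lt hp ξ hij
    exact hlt.trans_le (hmax (hb'.trans hb))
  have hm : rademacherMoment p ξ m = rademacherMoment p ξ (fun _ : ι => c) :=
    rademacherMoment_congr_abs fun k => by
      rw [abs_of_nonneg hc]
      by_contra hk
      exact (hbetter m hm ⟨k, hk⟩).false
  rw [← hm]
  refine ⟨hmax ha, fun heq => ?_, fun h => ?_⟩
  · by_contra! hk
    exact (hbetter a ha hk).ne heq
  · rw [hm]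
    exact rademacherMoment_congr_abs fun k => by rw [h k, abs_of_nonneg hc]

end RademacherSums

/-- For `p > 3`, `ξ ∈ ℝ`, `r > 0`: among all coefficients `(a_1, …, a_n)` with
`Σ a_k² = r²`, the quantity `E[|ξ + Σ a_k r_k|^p]^(1/p)` (with `r_k` independent
Rademacher variables, modeled by averaging over all sign choices) attains its
maximum exactly when `|a_k| = r/√n` for every `k`. -/
theorem stmt_4 (p ξ r : ℝ) (hp : 3 < p) (hr : 0 < r) (n : ℕ) (hn : 0 < n)
    (E : (Fin n → ℝ) → ℝ)
    (hE : ∀ a : Fin n → ℝ, E a =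
      ((1 / 2 ^ n : ℝ) *
        ∑ ε : Fin n → Bool, |ξ + ∑ k, a k * (if ε k then 1 else -1)| ^ p) ^ (1 / p))
    (a : Fin n → ℝ) (ha : ∑ k, (a k) ^ 2 = r ^ 2) :
    E a ≤ E (fun _ => r / Real.sqrt n) ∧
      (E a = E (fun _ => r / Real.sqrt n) ↔ ∀ k, |a k| = r / Real.sqrt n) := by
  have hn' : (0 : ℝ) < n := Nat.cast_pos.mpr hn
  have hsum : ∑ k, a k ^ 2 = Fintype.card (Fin n) * (r / √n) ^ 2 := by
    rw [ha, Fintype.card_fin, div_pow, sq_sqrt hn'.le]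
    field_simp
  obtain ⟨hle, hiff⟩ := rademacherMoment_le_const_and_eq_iff hp ξ (by positivity) hsum
  have hE' : ∀ b : Fin n → ℝ, E b = (1 / 2 ^ n * rademacherMoment p ξ b) ^ (1 / p) := hE
  have h2n : (0 : ℝ) < 1 / 2 ^ n := by positivity
  have hnonneg : ∀ b : Fin n → ℝ, 0 ≤ 1 / 2 ^ n * rademacherMoment p ξ b := fun b =>
    mul_nonneg h2n.le (rademacherMoment_nonneg p ξ b)
  rw [hE', hE', rpow_left_inj (hnonneg _) (hnonneg _) (by positivity), mul_right_inj' h2n.ne']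
  exact ⟨rpow_le_rpow (hnonneg _) (mul_le_mul_of_nonneg_left hle h2n.le) (by positivity), hiff⟩
end

section
/- Let p ≥ 1 and ξ ∈ ℝ be fixed, and let g ∈ L¹(0,1) be a nontrivial function (not a.e. zero) with ∫₀¹ g(t) dt = 0. Then the function h(x) = ∫₀¹ |ξ + x·g(t)|^p dt is increasing on (0, ∞). -/
/-!
Write `f_x = ξ + x g`. For `0 ≤ y ≤ x` and `x > 0`, `f_y` is the convex combination
`(y/x) f_x + (1 - y/x) ξ`, so convexity of `φ = |·|^p` gives
`∫ φ(f_y) ≤ (y/x) ∫ φ(f_x) + (1 - y/x) φ(ξ)`, and Jensen's inequality bounds `φ(ξ) = φ(∫ f_x)`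
by `∫ φ(f_x)` because `g` has mean zero. When `g ∉ Lᵖ` no `|f_x|^p` with `x ≠ 0` is integrable,
and all the integrals vanish.
-/

open MeasureTheory Set

theorem convexOn_abs_rpow {p : ℝ} (hp : 1 ≤ p) : ConvexOn ℝ univ fun u : ℝ => |u| ^ p := by
  have himage : (norm '' univ : Set ℝ) = Ici 0 :=
    Set.ext fun y => ⟨by rintro ⟨u, -, rfl⟩; exact norm_nonneg u,
      fun hy => ⟨y, mem_univ _, Real.norm_of_nonneg hy⟩⟩
  refine ConvexOn.comp (himage ▸ convexOn_rpow hp) convexOn_univ_norm ?_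
  rw [himage]
  exact fun a ha b _ hab => Real.rpow_le_rpow ha hab (by linarith)

theorem ConvexOn.comp_const_add_mul_le {φ : ℝ → ℝ} (hφ : ConvexOn ℝ univ φ) (ξ u : ℝ) {x y : ℝ}
    (hy : 0 ≤ y) (hyx : y ≤ x) (hx : 0 < x) :
    φ (ξ + y * u) ≤ y / x * φ (ξ + x * u) + (1 - y / x) * φ ξ := by
  have hcomb : ξ + y * u = y / x * (ξ + x * u) + (1 - y / x) * ξ := by
    field_simp
    ring
  rw [hcomb]
  exact hφ.2 (mem_univ _) (mem_univ _) (div_nonneg hy hx.le)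
    (sub_nonneg.2 ((div_le_one hx).2 hyx)) (by ring)

section MeanZero

variable {α : Type*} [MeasurableSpace α] {μ : Measure α} [IsProbabilityMeasure μ]
  {φ : ℝ → ℝ} {g : α → ℝ}

theorem ConvexOn.le_integral_comp_const_add_mul (hφ : ConvexOn ℝ univ φ) (hg : Integrable g μ)
    (hg_mean : ∫ t, g t ∂μ = 0) (ξ x : ℝ) (hint : Integrable (fun t => φ (ξ + x * g t)) μ) :
    φ ξ ≤ ∫ t, φ (ξ + x * g t) ∂μ := by
  have hf : Integrable (fun t => ξ + x * g t) μ := (integrable_const ξ).add (hg.const_mul x)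
  have hmean : ∫ t, (ξ + x * g t) ∂μ = ξ := by
    rw [integral_add (integrable_const ξ) (hg.const_mul x), integral_const_mul, hg_mean]
    simp
  have := hφ.map_integral_le (hφ.continuousOn isOpen_univ) isClosed_univ
    (.of_forall fun _ => mem_univ _) hf hint
  rwa [hmean] at this

theorem ConvexOn.integral_comp_const_add_mul_le_of_le (hφ : ConvexOn ℝ univ φ)
    (hg : Integrable g μ) (hg_mean : ∫ t, g t ∂μ = 0) (ξ : ℝ) {x y : ℝ} (hy : 0 ≤ y)
    (hyx : y ≤ x) (hint_y : Integrable (fun t => φ (ξ + y * g t)) μ)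
    (hint_x : Integrable (fun t => φ (ξ + x * g t)) μ) :
    ∫ t, φ (ξ + y * g t) ∂μ ≤ ∫ t, φ (ξ + x * g t) ∂μ := by
  rcases (hy.trans hyx).eq_or_lt with rfl | hx
  · rw [le_antisymm hyx hy]
  set I := ∫ t, φ (ξ + x * g t) ∂μ
  have hjensen : φ ξ ≤ I := hφ.le_integral_comp_const_add_mul hg hg_mean ξ x hint_x
  have hbound : Integrable (fun t => y / x * φ (ξ + x * g t) + (1 - y / x) * φ ξ) μ :=
    (hint_x.const_mul _).add (integrable_const _)
  calc ∫ t, φ (ξ + y * g t) ∂μ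
      ≤ ∫ t, (y / x * φ (ξ + x * g t) + (1 - y / x) * φ ξ) ∂μ :=
        integral_mono hint_y hbound fun t => hφ.comp_const_add_mul_le ξ (g t) hy hyx hx
    _ = y / x * I + (1 - y / x) * φ ξ := by
        rw [integral_add (hint_x.const_mul _) (integrable_const _), integral_const_mul]
        simp [I]
    _ ≤ y / x * I + (1 - y / x) * I := by
        gcongr
        exact sub_nonneg.2 ((div_le_one hx).2 hyx)
    _ = I := by ring

end MeanZero

theorem integrable_abs_const_add_mul_rpow_iff {α : Type*} [MeasurableSpace α] {μ : Measure α}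
    [IsFiniteMeasure μ] {g : α → ℝ} {p : ℝ} (hp : 0 < p) (ξ : ℝ) {x : ℝ} (hx : x ≠ 0)
    (hg : AEStronglyMeasurable g μ) :
    Integrable (fun t => |ξ + x * g t| ^ p) μ ↔ MemLp g (ENNReal.ofReal p) μ := by
  have hLp := integrable_norm_rpow_iff (f := fun t => ξ + x * g t) (p := ENNReal.ofReal p)
    (aestronglyMeasurable_const.add (hg.const_mul x)) (by simpa using hp) ENNReal.ofReal_ne_top
  simp only [Real.norm_eq_abs, ENNReal.toReal_ofReal hp.le] at hLp
  rw [hLp]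
  refine ⟨fun h => ?_, fun h => (memLp_const ξ).add (h.const_mul x)⟩
  convert (h.sub (memLp_const ξ)).const_mul x⁻¹ using 1
  ext t
  simp [hx]

theorem stmt_5_general (p ξ : ℝ) (hp : 1 ≤ p) (g : ℝ → ℝ)
    (hg_int : IntegrableOn g (Set.Ioo 0 1) volume)
    (hg_mean : ∫ t in Set.Ioo (0 : ℝ) 1, g t = 0) :
    MonotoneOn (fun x : ℝ => ∫ t in Set.Ioo (0 : ℝ) 1, |ξ + x * g t| ^ p)
      (Set.Ioi (0 : ℝ)) := by
  have : IsProbabilityMeasure (volume.restrict (Ioo (0 : ℝ) 1)) := ⟨by simp⟩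
  intro y hy x hx hyx
  have hint_iff (z : ℝ) (hz : 0 < z) :=
    integrable_abs_const_add_mul_rpow_iff (p := p) (by linarith) ξ hz.ne'
      hg_int.aestronglyMeasurable
  by_cases hgp : MemLp g (ENNReal.ofReal p) (volume.restrict (Ioo (0 : ℝ) 1))
  · exact (convexOn_abs_rpow hp).integral_comp_const_add_mul_le_of_le hg_int hg_mean ξ
      (le_of_lt hy) hyx ((hint_iff y hy).2 hgp) ((hint_iff x hx).2 hgp)
  · simp only [integral_undef (mt (hint_iff x hx).1 hgp),
      integral_undef (mt (hint_iff y hy).1 hgp), le_refl]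

/-- For `p ≥ 1`, `ξ ∈ ℝ`, and a nontrivial mean-zero `g ∈ L¹(0,1)`, the function
`h(x) = ∫₀¹ |ξ + x g(t)|^p dt` is increasing on `(0, ∞)`. -/
theorem stmt_5 (p ξ : ℝ) (hp : 1 ≤ p) (g : ℝ → ℝ)
    (hg_int : IntegrableOn g (Set.Ioo 0 1) volume)
    (hg_ne : ¬ (∀ᵐ t ∂(volume.restrict (Set.Ioo (0 : ℝ) 1)), g t = 0))
    (hg_mean : ∫ t in Set.Ioo (0 : ℝ) 1, g t = 0) :
    MonotoneOn (fun x : ℝ => ∫ t in Set.Ioo (0 : ℝ) 1, |ξ + x * g t| ^ p)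
      (Set.Ioi (0 : ℝ)) :=
  stmt_5_general p ξ hp g hg_int hg_mean
end

section
/- For any discrete martingale-difference sequence d_1, …, d_n and 0 < λ < 1/2, E[exp(λ (Σ_{k=1}^n d_k)² / ‖𝔖(d)‖_∞²)] ≤ 1/√(1 − 2λ), and the constant 1/√(1 − 2λ) is the best possible (it cannot be improved even restricting to Rademacher martingales). -/
/-!
Let `D k` be the supremum of `|d k|` over the atom of the `k`-th partition containing the point,
and `V j = ∑_{k<j} D k ^ 2`. Hoeffding's lemma, applied on each atom, makes
`exp (t S_j - t² V_j / 2)` a supermartingale for the partial sums `S_j`; as `V_n ≤ M²`, the sum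
`S = S_n` is sub-Gaussian with variance proxy `M²`. Averaging against a standard Gaussian `Y`,
`exp (λ s² / M²) = E exp (√(2λ) s Y / M)`, so Fubini gives
`E exp (λ S² / M²) ≤ E exp (λ Y²) = 1 / √(1 - 2λ)`.

For sharpness, the same identity turns the Rademacher average into `E cosh (√(2λ/m) Y) ^ m`,
which dominates `E (1 + λ Y² / m) ^ m → E exp (λ Y²)`.
-/

open MeasureTheory ProbabilityTheory Real Filter Finset
open scoped NNReal Topology

lemma integral_exp_mul_gaussianReal (b : ℝ) :
    ∫ y, exp (b * y) ∂gaussianReal 0 1 = exp (b ^ 2 / 2) := by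
  simpa [mgf] using congrFun (mgf_id_gaussianReal (μ := 0) (v := 1)) b

/-- For `1 / 2 ≤ lam` both sides are junk `0`: the integrand is not integrable, and the square
root of a nonpositive number is `0`. -/
lemma integral_exp_mul_sq_gaussianReal (lam : ℝ) :
    ∫ y, exp (lam * y ^ 2) ∂gaussianReal 0 1 = 1 / √(1 - 2 * lam) := by
  have hdensity : ∀ y : ℝ, gaussianPDFReal 0 1 y • exp (lam * y ^ 2)
      = (√(2 * π))⁻¹ * exp (-(1 / 2 - lam) * y ^ 2) := fun y => by
    simp only [gaussianPDFReal, NNReal.coe_one, mul_one, sub_zero, smul_eq_mul]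
    rw [mul_assoc, ← exp_add]
    congr 2
    ring
  rw [integral_gaussianReal_eq_integral_smul one_ne_zero]
  simp_rw [hdensity]
  rw [integral_const_mul, integral_gaussian, ← sqrt_inv, ← sqrt_mul (by positivity),
    one_div (√_), ← sqrt_inv]
  congr 1
  field_simp

lemma integrable_exp_mul_sq_gaussianReal {lam : ℝ} (h : lam < 1 / 2) :
    Integrable (fun y => exp (lam * y ^ 2)) (gaussianReal 0 1) :=
  .of_integral_ne_zero <| by
    rw [integral_exp_mul_sq_gaussianReal]
    exact (one_div_pos.2 (sqrt_pos.2 (by linarith))).ne'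

lemma one_add_sq_div_two_le_cosh (u : ℝ) : 1 + u ^ 2 / 2 ≤ cosh u := by
  have := sum_le_hasSum (range 2)
    (fun n _ => div_nonneg ((even_two_mul n).pow_nonneg u) (Nat.cast_nonneg _)) (hasSum_cosh u)
  simpa [sum_range_succ] using this

lemma one_add_div_pow_le_exp {z : ℝ} (hz : 0 ≤ z) (m : ℕ) : (1 + z / m) ^ m ≤ exp z := by
  have := one_sub_div_pow_le_exp_neg (n := m) (t := -z) (by linarith [m.cast_nonneg (α := ℝ)])
  rwa [neg_div, sub_neg_eq_add, neg_neg] at this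

def rademacherSum {m : ℕ} (ε : Fin m → Bool) : ℝ :=
  ∑ j, if ε j then 1 else -1

lemma sum_exp_mul_rademacherSum (u : ℝ) (m : ℕ) :
    ∑ ε : Fin m → Bool, exp (u * rademacherSum ε) = (2 * cosh u) ^ m := by
  simp_rw [rademacherSum, mul_sum, exp_sum]
  rw [← Fintype.prod_sum fun (_ : Fin m) (b : Bool) => exp (u * if b then 1 else -1)]
  simp [cosh_eq]
  ring

lemma average_exp_mul_sq_rademacherSum_eq_integral_cosh_pow {lam : ℝ} (h0 : 0 ≤ lam) (m : ℕ) :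
    (1 / 2 ^ m : ℝ) * ∑ ε : Fin m → Bool, exp (lam * (rademacherSum ε / √m) ^ 2)
      = ∫ y, cosh (√(2 * lam / m) * y) ^ m ∂gaussianReal 0 1 := by
  set a := √(2 * lam / m)
  have hmix : ∀ s : ℝ, exp (lam * (s / √m) ^ 2) = ∫ y, exp (a * s * y) ∂gaussianReal 0 1 := by
    intro s
    rw [integral_exp_mul_gaussianReal, mul_pow, div_pow, sq_sqrt (by positivity),
      sq_sqrt (by positivity)]
    congr 1
    ring
  simp_rw [hmix]
  rw [← integral_finsetSum _ fun ε _ => integrable_exp_mul_gaussianReal _, ← integral_const_mul]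
  congr with y
  simp_rw [mul_right_comm a _ y, sum_exp_mul_rademacherSum]
  rw [mul_pow]
  field_simp

lemma tendsto_integral_one_add_mul_sq_div_pow {lam : ℝ} (h0 : 0 ≤ lam) (h1 : lam < 1 / 2) :
    Tendsto (fun m : ℕ => ∫ y, (1 + lam * y ^ 2 / m) ^ m ∂gaussianReal 0 1) atTop
      (𝓝 (1 / √(1 - 2 * lam))) := by
  rw [← integral_exp_mul_sq_gaussianReal]
  refine tendsto_integral_of_dominated_convergence _ (fun m => by fun_prop)
    (integrable_exp_mul_sq_gaussianReal h1) (fun m => ae_of_all _ fun y => ?_)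
    (ae_of_all _ fun y => tendsto_one_add_div_pow_exp _)
  rw [norm_of_nonneg (by positivity)]
  exact one_add_div_pow_le_exp (by positivity) m

theorem exists_lt_average_exp_mul_sq_rademacherSum {lam : ℝ} (h0 : 0 ≤ lam) (h1 : lam < 1 / 2)
    {c : ℝ} (hc : c < 1 / √(1 - 2 * lam)) :
    ∃ m : ℕ, 0 < m ∧
      c < (1 / 2 ^ m : ℝ) * ∑ ε : Fin m → Bool, exp (lam * (rademacherSum ε / √m) ^ 2) := by
  obtain ⟨m, hcm, hm⟩ := (((tendsto_integral_one_add_mul_sq_div_pow h0 h1).eventually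
    (eventually_gt_nhds hc)).and (eventually_gt_atTop 0)).exists
  refine ⟨m, hm, hcm.trans_le ?_⟩
  set a := √(2 * lam / m)
  have ha : ∀ y, (a * y) ^ 2 = 2 * lam * y ^ 2 / m := fun y => by
    rw [mul_pow, sq_sqrt (by positivity)]
    ring
  have hcosh : ∀ y, cosh (a * y) ^ m ≤ exp (lam * y ^ 2) := fun y => by
    calc cosh (a * y) ^ m ≤ exp ((a * y) ^ 2 / 2) ^ m := by gcongr; exact cosh_le_exp_half_sq _
      _ = exp (lam * y ^ 2) := by
        rw [← exp_nat_mul, ha]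
        field_simp
  rw [average_exp_mul_sq_rademacherSum_eq_integral_cosh_pow h0]
  refine integral_mono_of_nonneg (ae_of_all _ fun y => by positivity)
    ((integrable_exp_mul_sq_gaussianReal h1).mono' (by fun_prop) (ae_of_all _ fun y => ?_))
    (ae_of_all _ fun y => ?_)
  · rw [norm_of_nonneg (by positivity)]
    exact hcosh y
  · refine pow_le_pow_left₀ (by positivity) ?_ m
    calc 1 + lam * y ^ 2 / m = 1 + (a * y) ^ 2 / 2 := by rw [ha]; ring
      _ ≤ cosh (a * y) := one_add_sq_div_two_le_cosh _

section Partition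

variable {Ω : Type*}

structure IsCountablePartition [MeasurableSpace Ω] (A : ℕ → Set Ω) : Prop where
  measurableSet : ∀ i, MeasurableSet (A i)
  pairwise_disjoint : Pairwise fun i j => Disjoint (A i) (A j)
  iUnion_eq_univ : ⋃ i, A i = Set.univ

def ConstOnAtoms {β : Type*} (A : ℕ → Set Ω) (f : Ω → β) : Prop :=
  ∀ i, ∀ x ∈ A i, ∀ y ∈ A i, f x = f y

def Refines (B A : ℕ → Set Ω) : Prop :=
  ∀ i, ∃ j, B i ⊆ A j

lemma Refines.refl (A : ℕ → Set Ω) : Refines A A :=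
  fun i => ⟨i, subset_rfl⟩

lemma Refines.trans {A B C : ℕ → Set Ω} (hCB : Refines C B) (hBA : Refines B A) :
    Refines C A := by
  intro i
  obtain ⟨j, hj⟩ := hCB i
  obtain ⟨l, hl⟩ := hBA j
  exact ⟨l, hj.trans hl⟩

lemma refines_of_le {part : ℕ → ℕ → Set Ω} (h : ∀ k, Refines (part (k + 1)) (part k))
    {k j : ℕ} (hkj : k ≤ j) : Refines (part j) (part k) := by
  induction j, hkj using Nat.le_induction with
  | base => exact .refl _
  | succ j _ ih => exact (h j).trans ih

lemma ConstOnAtoms.of_refines {β : Type*} {A B : ℕ → Set Ω} {f : Ω → β}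
    (hf : ConstOnAtoms A f) (hBA : Refines B A) : ConstOnAtoms B f := by
  intro i x hx y hy
  obtain ⟨j, hj⟩ := hBA i
  exact hf j x (hj hx) y (hj hy)

variable [MeasurableSpace Ω] {A : ℕ → Set Ω}

namespace IsCountablePartition

lemma exists_mem (hA : IsCountablePartition A) (x : Ω) : ∃ i, x ∈ A i :=
  Set.mem_iUnion.1 (hA.iUnion_eq_univ ▸ Set.mem_univ x)

noncomputable def index (hA : IsCountablePartition A) (x : Ω) : ℕ :=
  (hA.exists_mem x).choose

lemma mem_index (hA : IsCountablePartition A) (x : Ω) : x ∈ A (hA.index x) :=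
  (hA.exists_mem x).choose_spec

lemma index_eq (hA : IsCountablePartition A) {x : Ω} {i : ℕ} (hx : x ∈ A i) :
    hA.index x = i := by
  by_contra hne
  exact Set.disjoint_left.1 (hA.pairwise_disjoint hne) (hA.mem_index x) hx

lemma constOnAtoms_comp_index {β : Type*} (hA : IsCountablePartition A) (F : ℕ → β) :
    ConstOnAtoms A (fun x => F (hA.index x)) :=
  fun _ _ hx _ hy => by simp only [hA.index_eq hx, hA.index_eq hy]

lemma measurable_of_constOnAtoms {β : Type*} [MeasurableSpace β] (hA : IsCountablePartition A)
    {f : Ω → β} (hf : ConstOnAtoms A f) : Measurable f := by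
  intro s _
  have : f ⁻¹' s = ⋃ i, ⋃ (_ : ∃ y ∈ A i, f y ∈ s), A i := by
    ext x
    simp only [Set.mem_preimage, Set.mem_iUnion, exists_prop]
    constructor
    · exact fun hx => ⟨hA.index x, ⟨x, hA.mem_index x, hx⟩, hA.mem_index x⟩
    · rintro ⟨i, ⟨y, hy, hys⟩, hx⟩
      rwa [hf i x hx y hy]
  rw [this]
  exact .iUnion fun i => .iUnion fun _ => hA.measurableSet i

lemma hasSum_setIntegral {μ : Measure Ω} (hA : IsCountablePartition A) {f : Ω → ℝ}
    (hf : Integrable f μ) : HasSum (fun i => ∫ x in A i, f x ∂μ) (∫ x, f x ∂μ) := by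
  have := hasSum_integral_iUnion hA.measurableSet hA.pairwise_disjoint
    (by rw [hA.iUnion_eq_univ]; exact hf.integrableOn)
  rwa [hA.iUnion_eq_univ, Measure.restrict_univ] at this

end IsCountablePartition

end Partition

section Martingale

variable {Ω : Type*} [MeasurableSpace Ω] {μ : Measure Ω}

lemma ProbabilityTheory.HasSubgaussianMGF.integral_exp_mul_sq_div_le [IsFiniteMeasure μ]
    {X : Ω → ℝ} {c : ℝ≥0} (hX : HasSubgaussianMGF X c μ) (hc : 0 < c) {lam : ℝ} (h0 : 0 ≤ lam)
    (h1 : lam < 1 / 2) :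
    ∫ x, exp (lam * X x ^ 2 / c) ∂μ ≤ 1 / √(1 - 2 * lam) := by
  set a := √(2 * lam / c)
  have ha : a ^ 2 = 2 * lam / c := sq_sqrt (by positivity)
  have hmix : ∀ x, exp (lam * X x ^ 2 / c) = ∫ y, exp (a * X x * y) ∂gaussianReal 0 1 := by
    intro x
    rw [integral_exp_mul_gaussianReal]
    congr 1
    rw [mul_pow, ha]
    field_simp
  have hmgf : ∀ y, ∫ x, exp (a * X x * y) ∂μ ≤ exp (lam * y ^ 2) := by
    intro y
    calc ∫ x, exp (a * X x * y) ∂μ = mgf X μ (a * y) := by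
          simp only [mgf]
          congr with x
          ring_nf
      _ ≤ exp (c * (a * y) ^ 2 / 2) := hX.mgf_le _
      _ = exp (lam * y ^ 2) := by
          congr 1
          rw [mul_pow, ha]
          field_simp
  have hmeas : AEStronglyMeasurable (Function.uncurry fun x y => exp (a * X x * y))
      (μ.prod (gaussianReal 0 1)) := by
    have := hX.aemeasurable
    fun_prop
  have hint : Integrable (Function.uncurry fun x y => exp (a * X x * y))
      (μ.prod (gaussianReal 0 1)) := by
    refine (integrable_prod_iff' hmeas).2 ⟨ae_of_all _ fun y => ?_, ?_⟩
    · convert hX.integrable_exp_mul (a * y) using 3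
      simp only [Function.uncurry_apply_pair, mul_right_comm a]
    · refine (integrable_exp_mul_sq_gaussianReal h1).mono'
        hmeas.prod_swap.norm.integral_prod_right' (ae_of_all _ fun y => ?_)
      simp only [Function.uncurry_apply_pair, norm_of_nonneg (exp_pos _).le]
      rw [norm_of_nonneg (integral_nonneg fun x => (exp_pos _).le)]
      exact hmgf y
  calc ∫ x, exp (lam * X x ^ 2 / c) ∂μ
      = ∫ x, ∫ y, exp (a * X x * y) ∂gaussianReal 0 1 ∂μ := by simp_rw [hmix]
    _ = ∫ y, ∫ x, exp (a * X x * y) ∂μ ∂gaussianReal 0 1 := integral_integral_swap hint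
    _ ≤ ∫ y, exp (lam * y ^ 2) ∂gaussianReal 0 1 :=
        integral_mono hint.integral_prod_right (integrable_exp_mul_sq_gaussianReal h1) hmgf
    _ = 1 / √(1 - 2 * lam) := integral_exp_mul_sq_gaussianReal lam

lemma setIntegral_exp_mul_le [IsFiniteMeasure μ] {A : Set Ω} {f : Ω → ℝ} {c : ℝ}
    (hA : MeasurableSet A) (hf : AEMeasurable f μ) (hfc : ∀ x ∈ A, |f x| ≤ c)
    (hf0 : ∫ x in A, f x ∂μ = 0) (t : ℝ) :
    ∫ x in A, exp (t * f x) ∂μ ≤ μ.real A * exp (c ^ 2 * t ^ 2 / 2) := by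
  rcases eq_or_ne (μ A) 0 with hμA | hμA
  · simp [Measure.restrict_eq_zero.2 hμA, measureReal_def, hμA]
  have : IsProbabilityMeasure μ[|A] := cond_isProbabilityMeasure hμA
  have hcond : ∀ g : Ω → ℝ, ∫ x, g x ∂μ[|A] = (μ.real A)⁻¹ * ∫ x in A, g x ∂μ := fun g => by
    rw [ProbabilityTheory.cond, integral_smul_measure, ENNReal.toReal_inv, smul_eq_mul,
      measureReal_def]
  have hIcc : ∀ᵐ x ∂μ[|A], f x ∈ Set.Icc (-c) c :=
    (ae_cond_mem hA).mono fun x hx => abs_le.1 (hfc x hx)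
  have hmgf := (hasSubgaussianMGF_of_mem_Icc_of_integral_eq_zero
    (hf.mono_ac cond_absolutelyContinuous) hIcc (by rw [hcond, hf0, mul_zero])).mgf_le t
  rw [mgf, hcond] at hmgf
  have hpar : (((‖c - -c‖₊ / 2) ^ 2 : ℝ≥0) : ℝ) = c ^ 2 := by
    simp only [NNReal.coe_pow, NNReal.coe_div, coe_nnnorm, norm_eq_abs, sub_neg_eq_add,
      NNReal.coe_ofNat, div_pow, sq_abs]
    ring
  have hpos : 0 < μ.real A := ENNReal.toReal_pos hμA (measure_ne_top μ A)
  rwa [hpar, inv_mul_le_iff₀ hpos] at hmgf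

lemma mul_sub_sq_mul_sq_le_half {a b : ℝ} (hab : |a| ≤ b) (t : ℝ) :
    t * a - t ^ 2 / 2 * b ^ 2 ≤ 1 / 2 := by
  have hta : t * a ≤ |t| * b :=
    (le_abs_self _).trans ((abs_mul t a).trans_le (mul_le_mul_of_nonneg_left hab (abs_nonneg t)))
  have hsq : t ^ 2 * b ^ 2 = (|t| * b) ^ 2 := by rw [mul_pow, sq_abs]
  nlinarith [sq_nonneg (|t| * b - 1)]

lemma MeasureTheory.Integrable.mul_exp_mul_sub {Y d D : Ω → ℝ} (hY : Integrable Y μ)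
    (hd : Measurable d) (hD : Measurable D) (hdD : ∀ x, |d x| ≤ D x) (t : ℝ) :
    Integrable (fun x => Y x * exp (t * d x - t ^ 2 / 2 * D x ^ 2)) μ :=
  hY.mul_bdd (by fun_prop) <| ae_of_all _ fun x => by
    rw [norm_of_nonneg (exp_pos _).le]
    exact exp_le_exp.2 (mul_sub_sq_mul_sq_le_half (hdD x) t)

lemma IsCountablePartition.integral_mul_exp_le [IsFiniteMeasure μ] {A : ℕ → Set Ω}
    (hA : IsCountablePartition A) {Y d D : Ω → ℝ} (hY : Integrable Y μ) (hY0 : ∀ x, 0 ≤ Y x)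
    (hYA : ConstOnAtoms A Y) (hDA : ConstOnAtoms A D) (hd : Measurable d)
    (hdD : ∀ x, |d x| ≤ D x) (hd0 : ∀ i, ∫ x in A i, d x ∂μ = 0) (t : ℝ) :
    ∫ x, Y x * exp (t * d x - t ^ 2 / 2 * D x ^ 2) ∂μ ≤ ∫ x, Y x ∂μ := by
  refine hasSum_le (fun i => ?_)
    (hA.hasSum_setIntegral (hY.mul_exp_mul_sub hd (hA.measurable_of_constOnAtoms hDA) hdD t))
    (hA.hasSum_setIntegral hY)
  rcases (A i).eq_empty_or_nonempty with hAi | ⟨x₀, hx₀⟩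
  · simp [hAi]
  have hYx₀ : ∀ x ∈ A i, Y x = Y x₀ := fun x hx => hYA i x hx x₀ hx₀
  have hDx₀ : ∀ x ∈ A i, D x = D x₀ := fun x hx => hDA i x hx x₀ hx₀
  calc ∫ x in A i, Y x * exp (t * d x - t ^ 2 / 2 * D x ^ 2) ∂μ
      = Y x₀ * exp (-(t ^ 2 / 2 * D x₀ ^ 2)) * ∫ x in A i, exp (t * d x) ∂μ := by
        rw [← integral_const_mul]
        refine setIntegral_congr_fun (hA.measurableSet i) fun x hx => ?_
        simp only [hYx₀ x hx, hDx₀ x hx, sub_eq_add_neg, exp_add]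
        ring
    _ ≤ Y x₀ * exp (-(t ^ 2 / 2 * D x₀ ^ 2)) * (μ.real (A i) * exp (D x₀ ^ 2 * t ^ 2 / 2)) := by
        gcongr
        · exact mul_nonneg (hY0 x₀) (exp_pos _).le
        · exact setIntegral_exp_mul_le (hA.measurableSet i) hd.aemeasurable
            (fun x hx => (hdD x).trans_eq (hDx₀ x hx)) (hd0 i) t
    _ = ∫ x in A i, Y x ∂μ := by
        have hcancel : exp (-(t ^ 2 / 2 * D x₀ ^ 2)) * exp (D x₀ ^ 2 * t ^ 2 / 2) = 1 := by
          rw [← exp_add, ← exp_zero]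
          ring_nf
        rw [setIntegral_congr_fun (hA.measurableSet i) hYx₀, setIntegral_const, smul_eq_mul]
        linear_combination (Y x₀ * μ.real (A i)) * hcancel

/-- `part k` stands for the `k`-th σ-algebra of the filtration: `d k` is adapted and has mean zero
given it, and the bound `D k` is predictable. -/
theorem hasSubgaussianMGF_sum_of_sum_sq_le [IsProbabilityMeasure μ] {part : ℕ → ℕ → Set Ω}
    (hpart : ∀ k, IsCountablePartition (part k)) (hrefine : ∀ k, Refines (part (k + 1)) (part k))
    {d D : ℕ → Ω → ℝ} (hd : ∀ k, ConstOnAtoms (part (k + 1)) (d k))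
    (hd0 : ∀ k i, ∫ x in part k i, d k x ∂μ = 0) (hD : ∀ k, ConstOnAtoms (part k) (D k))
    (hdD : ∀ k x, |d k x| ≤ D k x) {n : ℕ} {c : ℝ≥0}
    (hc : ∀ᵐ x ∂μ, ∑ k ∈ range n, D k x ^ 2 ≤ c) :
    HasSubgaussianMGF (fun x => ∑ k ∈ range n, d k x) c μ := by
  have hd_meas k : Measurable (d k) := (hpart (k + 1)).measurable_of_constOnAtoms (hd k)
  have hD_meas k : Measurable (D k) := (hpart k).measurable_of_constOnAtoms (hD k)
  set Y : ℝ → ℕ → Ω → ℝ := fun t j x =>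
    exp (t * ∑ k ∈ range j, d k x - t ^ 2 / 2 * ∑ k ∈ range j, D k x ^ 2)
  have hY_succ t j : Y t (j + 1) = fun x => Y t j x * exp (t * d j x - t ^ 2 / 2 * D j x ^ 2) :=
    funext fun x => by
      simp only [Y, sum_range_succ, ← exp_add]
      ring_nf
  have hY_const t j : ConstOnAtoms (part j) (Y t j) := by
    intro i x hx y hy
    have hS : ∀ k ∈ range j, d k x = d k y := fun k hk =>
      (hd k).of_refines (refines_of_le hrefine (mem_range.1 hk)) i x hx y hy
    have hV : ∀ k ∈ range j, D k x ^ 2 = D k y ^ 2 := fun k hk => by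
      rw [(hD k).of_refines (refines_of_le hrefine (mem_range.1 hk).le) i x hx y hy]
    simp only [Y, sum_congr rfl hS, sum_congr rfl hV]
  have hY t j : Integrable (Y t j) μ ∧ ∫ x, Y t j x ∂μ ≤ 1 := by
    induction j with
    | zero => simp [Y]
    | succ j ih =>
      rw [hY_succ]
      exact ⟨ih.1.mul_exp_mul_sub (hd_meas j) (hD_meas j) (hdD j) t,
        ((hpart j).integral_mul_exp_le ih.1 (fun x => (exp_pos _).le) (hY_const t j) (hD j)
          (hd_meas j) (hdD j) (hd0 j) t).trans ih.2⟩
  have hbound t : ∀ᵐ x ∂μ, exp (t * ∑ k ∈ range n, d k x) ≤ exp (c * t ^ 2 / 2) * Y t n x :=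
    hc.mono fun x hx => by
      rw [← exp_add, exp_le_exp]
      nlinarith [mul_le_mul_of_nonneg_left hx (sq_nonneg t)]
  have hint t : Integrable (fun x => exp (t * ∑ k ∈ range n, d k x)) μ :=
    ((hY t n).1.const_mul _).mono' (by fun_prop) <| (hbound t).mono fun x hx => by
      rwa [norm_of_nonneg (exp_pos _).le]
  refine ⟨hint, fun t => ?_⟩
  calc mgf (fun x => ∑ k ∈ range n, d k x) μ t
      ≤ ∫ x, exp (c * t ^ 2 / 2) * Y t n x ∂μ :=
        integral_mono_ae (hint t) ((hY t n).1.const_mul _) (hbound t)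
    _ ≤ exp (c * t ^ 2 / 2) := by
        rw [integral_const_mul]
        exact mul_le_of_le_one_right (exp_pos _).le (hY t n).2

theorem hasSubgaussianMGF_sum_of_squareFunction_le [IsProbabilityMeasure μ] {n : ℕ}
    {part : ℕ → ℕ → Set Ω} (hpart : ∀ k, IsCountablePartition (part k))
    (hrefine : ∀ k, Refines (part (k + 1)) (part k)) {d : Fin n → Ω → ℝ}
    (hd_bdd : ∀ k, ∃ C : ℝ, ∀ x, |d k x| ≤ C)
    (hd_adapted : ∀ k : Fin n, ConstOnAtoms (part (k.1 + 1)) (d k))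
    (hd_mart : ∀ (k : Fin n) (i : ℕ), ∫ x in part k.1 i, d k x ∂μ = 0) {c : ℝ≥0}
    (hSq : ∀ᵐ x ∂μ, ∀ i : ℕ → ℕ, (∀ k : Fin n, x ∈ part k.1 (i k.1)) →
      ∑ k : Fin n, (sSup ((fun y => |d k y|) '' part k.1 (i k.1))) ^ 2 ≤ c) :
    HasSubgaussianMGF (fun x => ∑ k, d k x) c μ := by
  set d' : ℕ → Ω → ℝ := fun k x => if h : k < n then d ⟨k, h⟩ x else 0
  set D : ℕ → Ω → ℝ := fun k x =>
    if h : k < n then sSup ((fun y => |d ⟨k, h⟩ y|) '' part k ((hpart k).index x)) else 0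
  have hext : HasSubgaussianMGF (fun x => ∑ k ∈ range n, d' k x) c μ := by
    refine hasSubgaussianMGF_sum_of_sum_sq_le (D := D) hpart hrefine (fun k => ?_)
      (fun k i => ?_) (fun k => ?_) (fun k x => ?_) ?_
    · by_cases h : k < n
      · simpa [d', h] using hd_adapted ⟨k, h⟩
      · simp [d', h, ConstOnAtoms]
    · by_cases h : k < n
      · simpa [d', h] using hd_mart ⟨k, h⟩ i
      · simp [d', h]
    · by_cases h : k < n
      · simpa [D, h] using
          (hpart k).constOnAtoms_comp_index fun i => sSup ((fun y => |d ⟨k, h⟩ y|) '' part k i)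
      · simp [D, h, ConstOnAtoms]
    · by_cases h : k < n
      · obtain ⟨C, hC⟩ := hd_bdd ⟨k, h⟩
        simp only [d', D, h, dif_pos]
        exact le_csSup ⟨C, by rintro _ ⟨y, -, rfl⟩; exact hC y⟩ ⟨x, (hpart k).mem_index x, rfl⟩
      · simp [d', D, h]
    · filter_upwards [hSq] with x hx
      have := hx (fun k => (hpart k).index x) fun k => (hpart k).mem_index x
      rw [← Fin.sum_univ_eq_sum_range (fun k => D k x ^ 2)]
      simpa [D] using this
  have hsum : (fun x => ∑ k ∈ range n, d' k x) = fun x => ∑ k, d k x := funext fun x => by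
    rw [← Fin.sum_univ_eq_sum_range (fun k => d' k x)]
    simp [d']
  rwa [hsum] at hext

end Martingale

theorem stmt_16_general
    {Ω : Type*} [MeasurableSpace Ω] (μ : Measure Ω) [IsProbabilityMeasure μ]
    (n : ℕ) (lam : ℝ) (h0 : 0 < lam) (h1 : lam < 1 / 2)
    (part : ℕ → ℕ → Set Ω)
    (hpart_meas : ∀ k i, MeasurableSet (part k i))
    (hpart_disj : ∀ k, Pairwise fun i j => Disjoint (part k i) (part k j))
    (hpart_cover : ∀ k, (⋃ i, part k i) = Set.univ)
    (hpart_refine : ∀ k i, ∃ j, part (k + 1) i ⊆ part k j)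
    (d : Fin n → Ω → ℝ)
    (hd_bdd : ∀ k, ∃ C : ℝ, ∀ x, |d k x| ≤ C)
    (hd_adapted : ∀ (k : Fin n) (i : ℕ), ∀ x ∈ part (k.1 + 1) i, ∀ y ∈ part (k.1 + 1) i,
      d k x = d k y)
    (hd_mart : ∀ (k : Fin n) (i : ℕ), ∫ x in part k.1 i, d k x ∂μ = 0)
    (M : ℝ) (hM : 0 < M)
    (hSq : ∀ᵐ x ∂μ, ∀ i : ℕ → ℕ, (∀ k : Fin n, x ∈ part k.1 (i k.1)) →
      ∑ k : Fin n, (sSup ((fun y => |d k y|) '' part k.1 (i k.1))) ^ 2 ≤ M ^ 2) :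
    (∫ x, Real.exp (lam * (∑ k, d k x) ^ 2 / M ^ 2) ∂μ ≤ 1 / Real.sqrt (1 - 2 * lam)) ∧
      ∀ c : ℝ, c < 1 / Real.sqrt (1 - 2 * lam) →
        ∃ m : ℕ, 0 < m ∧
          c < (1 / 2 ^ m : ℝ) *
            ∑ ε : Fin m → Bool,
              Real.exp (lam * ((∑ j, (if ε j then (1 : ℝ) else -1)) / Real.sqrt m) ^ 2) := by
  refine ⟨?_, fun c hc => exists_lt_average_exp_mul_sq_rademacherSum h0.le h1 hc⟩
  have hX := hasSubgaussianMGF_sum_of_squareFunction_le (c := ⟨M ^ 2, sq_nonneg M⟩)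
    (fun k => ⟨hpart_meas k, hpart_disj k, hpart_cover k⟩) hpart_refine hd_bdd hd_adapted
    hd_mart hSq
  exact hX.integral_exp_mul_sq_div_le (NNReal.coe_pos.1 (pow_pos hM 2)) h0.le h1

/-- Sharp sub-Gaussian bound for discrete martingale differences: if a.e. the
Chang–Wilson–Wolff square function is at most `M`, then for `0 < λ < 1/2`,
`E[exp(λ (Σ d_k)² / M²)] ≤ 1/√(1-2λ)`, and the constant `1/√(1-2λ)` is best
possible even among Rademacher martingales. -/
theorem stmt_16
    {Ω : Type*} [MeasurableSpace Ω] (μ : Measure Ω) [IsProbabilityMeasure μ]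
    (n : ℕ) (hn : 0 < n) (lam : ℝ) (h0 : 0 < lam) (h1 : lam < 1 / 2)
    (part : ℕ → ℕ → Set Ω)
    (hpart_meas : ∀ k i, MeasurableSet (part k i))
    (hpart_disj : ∀ k, Pairwise fun i j => Disjoint (part k i) (part k j))
    (hpart_cover : ∀ k, (⋃ i, part k i) = Set.univ)
    (hpart_zero : part 0 0 = Set.univ)
    (hpart_refine : ∀ k i, ∃ j, part (k + 1) i ⊆ part k j)
    (d : Fin n → Ω → ℝ)
    (hd_meas : ∀ k, Measurable (d k))
    (hd_bdd : ∀ k, ∃ C : ℝ, ∀ x, |d k x| ≤ C)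
    (hd_adapted : ∀ (k : Fin n) (i : ℕ), ∀ x ∈ part (k.1 + 1) i, ∀ y ∈ part (k.1 + 1) i,
      d k x = d k y)
    (hd_mart : ∀ (k : Fin n) (i : ℕ), ∫ x in part k.1 i, d k x ∂μ = 0)
    (M : ℝ) (hM : 0 < M)
    (hSq : ∀ᵐ x ∂μ, ∀ i : ℕ → ℕ, (∀ k : Fin n, x ∈ part k.1 (i k.1)) →
      ∑ k : Fin n, (sSup ((fun y => |d k y|) '' part k.1 (i k.1))) ^ 2 ≤ M ^ 2) :
    (∫ x, Real.exp (lam * (∑ k, d k x) ^ 2 / M ^ 2) ∂μ ≤ 1 / Real.sqrt (1 - 2 * lam)) ∧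
      ∀ c : ℝ, c < 1 / Real.sqrt (1 - 2 * lam) →
        ∃ m : ℕ, 0 < m ∧
          c < (1 / 2 ^ m : ℝ) *
            ∑ ε : Fin m → Bool,
              Real.exp (lam * ((∑ j, (if ε j then (1 : ℝ) else -1)) / Real.sqrt m) ^ 2) :=
  stmt_16_general μ n lam h0 h1 part hpart_meas hpart_disj hpart_cover hpart_refine d hd_bdd
    hd_adapted hd_mart M hM hSq
end

section
/- (Chang–Wilson–Wolff) Let f_0, f_1, …, f_n be a discrete martingale with respect to a filtration generated by countable partitions, with differences d_k = f_k − f_{k−1} bounded. Then for every λ > 0, P(f_n − f_0 > λ) ≤ exp(−λ²/(2‖𝔖(f)‖_∞²)). -/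
/-!
Increments are indexed from `0`: `d k` is constant on the atoms of the `(k+1)`-st partition, has
mean zero on those of the `k`-th, and `D k = atomSup part k (d k)` is constant on the latter.
On an atom `A` of the `m`-th partition, `d k` for `k < m` and `D k` for `k ≤ m` are therefore
constant, while `|d m| ≤ D m` and `d m` has mean zero. Hoeffding's lemma for `μ[|A]` gives
`∫_A exp (λ d m) ≤ μ A · exp (λ² (D m)² / 2)`, so `exp (∑_{k<m} (λ d k - λ² (D k)² / 2))` is a
supermartingale with expectation at most `1`. Markov's inequality with `λ = t / M²` and
`∑ (D k)² ≤ M²` gives the bound.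
-/

open MeasureTheory ProbabilityTheory Real Set Finset

lemma setIntegral_exp_mul_le_of_abs_le {Ω : Type*} [MeasurableSpace Ω] {μ : Measure Ω}
    [IsFiniteMeasure μ] {A : Set Ω} (hA : MeasurableSet A)
    {X : Ω → ℝ} (hX : AEMeasurable X μ) {c : ℝ} (hXc : ∀ x ∈ A, |X x| ≤ c)
    (hX0 : ∫ x in A, X x ∂μ = 0) (L : ℝ) :
    ∫ x in A, exp (L * X x) ∂μ ≤ μ.real A * exp (L ^ 2 * c ^ 2 / 2) := by
  rcases eq_or_ne (μ A) 0 with hA0 | hA0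
  · simp [Measure.restrict_eq_zero.mpr hA0, measureReal_def, hA0]
  have := cond_isProbabilityMeasure (μ := μ) hA0
  have hcond (f : Ω → ℝ) : ∫ x, f x ∂μ[|A] = (μ.real A)⁻¹ * ∫ x in A, f x ∂μ := by
    simp [ProbabilityTheory.cond, integral_smul_measure, measureReal_def]
  have hbound : ∀ᵐ x ∂μ[|A], X x ∈ Icc (-c) c :=
    ae_cond_of_forall_mem hA fun x hx => abs_le.mp (hXc x hx)
  have hoeff := (hasSubgaussianMGF_of_mem_Icc_of_integral_eq_zero
    (hX.mono_ac cond_absolutelyContinuous) hbound (by rw [hcond, hX0, mul_zero])).mgf_le L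
  have hparam : (((‖c - -c‖₊ / 2) ^ 2 : NNReal) : ℝ) = c ^ 2 := by simp [← two_mul]
  rw [mgf, hcond, hparam] at hoeff
  have hpos : 0 < μ.real A := ENNReal.toReal_pos hA0 (measure_ne_top μ A)
  simpa only [mul_comm (c ^ 2)] using (inv_mul_le_iff₀ hpos).mp hoeff

section PartitionFiltration

variable {Ω : Type*}

structure IsRefiningPartitionSeq [MeasurableSpace Ω] (part : ℕ → ℕ → Set Ω) : Prop where
  measurableSet : ∀ k i, MeasurableSet (part k i)
  disjoint : ∀ k, Pairwise fun i j => Disjoint (part k i) (part k j)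
  iUnion_eq_univ : ∀ k, ⋃ i, part k i = Set.univ
  refines : ∀ k i, ∃ j, part (k + 1) i ⊆ part k j

noncomputable def atomIndex (part : ℕ → ℕ → Set Ω) (k : ℕ) (x : Ω) : ℕ :=
  Classical.epsilon fun i => x ∈ part k i

def IsAtomwiseConst {β : Type*} (part : ℕ → ℕ → Set Ω) (k : ℕ) (f : Ω → β) : Prop :=
  ∀ i, ∀ x ∈ part k i, ∀ y ∈ part k i, f x = f y

noncomputable def atomSup (part : ℕ → ℕ → Set Ω) (k : ℕ) (f : Ω → ℝ) (x : Ω) : ℝ :=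
  sSup ((fun y => |f y|) '' part k (atomIndex part k x))

noncomputable def expProcess (part : ℕ → ℕ → Set Ω) (d : ℕ → Ω → ℝ) (L : ℝ) (m : ℕ) (x : Ω) :
    ℝ :=
  exp (∑ k ∈ range m, (L * d k x - L ^ 2 * atomSup part k (d k) x ^ 2 / 2))

lemma expProcess_succ {part : ℕ → ℕ → Set Ω} {d : ℕ → Ω → ℝ} {L : ℝ} (m : ℕ) (x : Ω) :
    expProcess part d L (m + 1) x =
      expProcess part d L m x * exp (L * d m x - L ^ 2 * atomSup part m (d m) x ^ 2 / 2) := by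
  rw [expProcess, expProcess, sum_range_succ, exp_add]

variable [MeasurableSpace Ω]

namespace IsRefiningPartitionSeq

variable {part : ℕ → ℕ → Set Ω}

lemma mem_atomIndex (hP : IsRefiningPartitionSeq part) (k : ℕ) (x : Ω) :
    x ∈ part k (atomIndex part k x) := by
  have hx : x ∈ ⋃ i, part k i := hP.iUnion_eq_univ k ▸ mem_univ x
  exact Classical.epsilon_spec (mem_iUnion.mp hx)

lemma atomIndex_eq (hP : IsRefiningPartitionSeq part) {k i : ℕ} {x : Ω} (hx : x ∈ part k i) :
    atomIndex part k x = i := by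
  by_contra h
  exact Set.disjoint_left.mp (hP.disjoint k h) (hP.mem_atomIndex k x) hx

lemma measurable_atomIndex (hP : IsRefiningPartitionSeq part) (k : ℕ) :
    Measurable (atomIndex part k) := by
  refine measurable_to_countable' fun i => ?_
  convert hP.measurableSet k i
  ext x
  exact ⟨fun h => h ▸ hP.mem_atomIndex k x, hP.atomIndex_eq⟩

lemma exists_subset_of_le (hP : IsRefiningPartitionSeq part) {k m : ℕ} (hkm : k ≤ m) (i : ℕ) :
    ∃ j, part m i ⊆ part k j := by
  induction m, hkm using Nat.le_induction generalizing i with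
  | base => exact ⟨i, subset_rfl⟩
  | succ m _ ih =>
    obtain ⟨j, hj⟩ := hP.refines m i
    obtain ⟨l, hl⟩ := ih j
    exact ⟨l, hj.trans hl⟩

lemma hasSum_setIntegral {μ : Measure Ω} (hP : IsRefiningPartitionSeq part) {f : Ω → ℝ}
    (hf : Integrable f μ) (k : ℕ) :
    HasSum (fun i => ∫ x in part k i, f x ∂μ) (∫ x, f x ∂μ) := by
  simpa [hP.iUnion_eq_univ k] using
    hasSum_integral_iUnion (hP.measurableSet k) (hP.disjoint k) hf.integrableOn

lemma isAtomwiseConst_atomSup (hP : IsRefiningPartitionSeq part) (k : ℕ) (f : Ω → ℝ) :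
    IsAtomwiseConst part k (atomSup part k f) := by
  intro i x hx y hy
  rw [atomSup, atomSup, hP.atomIndex_eq hx, hP.atomIndex_eq hy]

lemma measurable_atomSup (hP : IsRefiningPartitionSeq part) (k : ℕ) (f : Ω → ℝ) :
    Measurable (atomSup part k f) :=
  (measurable_from_nat (f := fun i => sSup ((fun y => |f y|) '' part k i))).comp
    (hP.measurable_atomIndex k)

lemma abs_le_atomSup (hP : IsRefiningPartitionSeq part) {f : Ω → ℝ} {C : ℝ}
    (hC : ∀ x, |f x| ≤ C) (k : ℕ) (x : Ω) : |f x| ≤ atomSup part k f x :=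
  le_csSup ⟨C, by rintro _ ⟨y, -, rfl⟩; exact hC y⟩ ⟨x, hP.mem_atomIndex k x, rfl⟩

end IsRefiningPartitionSeq

lemma IsAtomwiseConst.mono {β : Type*} {part : ℕ → ℕ → Set Ω} {f : Ω → β} {k m : ℕ}
    (hf : IsAtomwiseConst part k f) (hP : IsRefiningPartitionSeq part) (hkm : k ≤ m) :
    IsAtomwiseConst part m f := by
  intro i x hx y hy
  obtain ⟨j, hj⟩ := hP.exists_subset_of_le hkm i
  exact hf j x (hj hx) y (hj hy)

section ExpProcess

variable {part : ℕ → ℕ → Set Ω} {d : ℕ → Ω → ℝ} {L : ℝ}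

lemma measurable_expProcess (hP : IsRefiningPartitionSeq part) (hd_meas : ∀ k, Measurable (d k))
    (m : ℕ) : Measurable (expProcess part d L m) :=
  (Finset.measurable_sum _ fun k _ => ((hd_meas k).const_mul L).sub
    ((((hP.measurable_atomSup k (d k)).pow_const 2).const_mul (L ^ 2)).div_const 2)).exp

lemma integrable_expProcess {μ : Measure Ω} [IsFiniteMeasure μ] (hP : IsRefiningPartitionSeq part)
    (hd_meas : ∀ k, Measurable (d k)) (hd_bdd : ∀ k, ∃ C : ℝ, ∀ x, |d k x| ≤ C) (m : ℕ) :
    Integrable (expProcess part d L m) μ := by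
  choose C hC using hd_bdd
  refine .of_bound (measurable_expProcess hP hd_meas m).aestronglyMeasurable
    (exp (∑ k ∈ range m, |L| * C k)) (.of_forall fun x => ?_)
  rw [expProcess, norm_of_nonneg (exp_pos _).le, exp_le_exp]
  refine sum_le_sum fun k _ => ?_
  have hLd : L * d k x ≤ |L| * C k := by
    calc L * d k x ≤ |L * d k x| := le_abs_self _
      _ = |L| * |d k x| := abs_mul L (d k x)
      _ ≤ |L| * C k := mul_le_mul_of_nonneg_left (hC k x) (abs_nonneg L)
  nlinarith [sq_nonneg (L * atomSup part k (d k) x)]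

lemma isAtomwiseConst_expProcess (hP : IsRefiningPartitionSeq part)
    (hd_adapted : ∀ k, IsAtomwiseConst part (k + 1) (d k)) (m : ℕ) :
    IsAtomwiseConst part m (expProcess part d L m) := by
  intro i x hx y hy
  refine congrArg exp (sum_congr rfl fun k hk => ?_)
  have hkm : k + 1 ≤ m := mem_range.mp hk
  rw [(hd_adapted k).mono hP hkm i x hx y hy,
    (hP.isAtomwiseConst_atomSup k (d k)).mono hP (by omega) i x hx y hy]

variable {μ : Measure Ω} [IsFiniteMeasure μ]

lemma setIntegral_expProcess_succ_le (hP : IsRefiningPartitionSeq part)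
    (hd_meas : ∀ k, Measurable (d k)) (hd_bdd : ∀ k, ∃ C : ℝ, ∀ x, |d k x| ≤ C)
    (hd_adapted : ∀ k, IsAtomwiseConst part (k + 1) (d k))
    (hd_mart : ∀ k i, ∫ x in part k i, d k x ∂μ = 0) (m i : ℕ) :
    ∫ x in part m i, expProcess part d L (m + 1) x ∂μ ≤
      ∫ x in part m i, expProcess part d L m x ∂μ := by
  obtain hA | ⟨x₀, hx₀⟩ := (part m i).eq_empty_or_nonempty
  · simp [hA]
  have hA := hP.measurableSet m i
  set v := expProcess part d L m x₀
  set c := atomSup part m (d m) x₀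
  have hv : ∀ x ∈ part m i, expProcess part d L m x = v :=
    fun x hx => isAtomwiseConst_expProcess hP hd_adapted m i x hx x₀ hx₀
  have hc : ∀ x ∈ part m i, atomSup part m (d m) x = c :=
    fun x hx => hP.isAtomwiseConst_atomSup m (d m) i x hx x₀ hx₀
  obtain ⟨C, hC⟩ := hd_bdd m
  have hdc : ∀ x ∈ part m i, |d m x| ≤ c := fun x hx => hc x hx ▸ hP.abs_le_atomSup hC m x
  have hv_pos : 0 < v := exp_pos _
  calc ∫ x in part m i, expProcess part d L (m + 1) x ∂μ
      = ∫ x in part m i, v * exp (-(L ^ 2 * c ^ 2 / 2)) * exp (L * d m x) ∂μ := by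
        refine setIntegral_congr_fun hA fun x hx => ?_
        rw [expProcess_succ, hv x hx, hc x hx, sub_eq_add_neg, exp_add]
        ring
    _ = v * exp (-(L ^ 2 * c ^ 2 / 2)) * ∫ x in part m i, exp (L * d m x) ∂μ :=
        integral_const_mul _ _
    _ ≤ v * exp (-(L ^ 2 * c ^ 2 / 2)) * (μ.real (part m i) * exp (L ^ 2 * c ^ 2 / 2)) := by
        gcongr
        exact setIntegral_exp_mul_le_of_abs_le hA (hd_meas m).aemeasurable hdc (hd_mart m i) L
    _ = v * μ.real (part m i) := by
        rw [mul_mul_mul_comm, ← exp_add, neg_add_cancel, exp_zero, mul_one]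
    _ = ∫ x in part m i, expProcess part d L m x ∂μ := by
        rw [setIntegral_congr_fun hA hv, setIntegral_const, smul_eq_mul, mul_comm]

lemma integral_expProcess_le (hP : IsRefiningPartitionSeq part)
    (hd_meas : ∀ k, Measurable (d k)) (hd_bdd : ∀ k, ∃ C : ℝ, ∀ x, |d k x| ≤ C)
    (hd_adapted : ∀ k, IsAtomwiseConst part (k + 1) (d k))
    (hd_mart : ∀ k i, ∫ x in part k i, d k x ∂μ = 0) (m : ℕ) :
    ∫ x, expProcess part d L m x ∂μ ≤ μ.real univ := by
  induction m with
  | zero => simp [expProcess]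
  | succ m ih =>
    exact (hasSum_le
      (setIntegral_expProcess_succ_le hP hd_meas hd_bdd hd_adapted hd_mart m)
      (hP.hasSum_setIntegral (integrable_expProcess hP hd_meas hd_bdd (m + 1)) m)
      (hP.hasSum_setIntegral (integrable_expProcess hP hd_meas hd_bdd m) m)).trans ih

end ExpProcess

theorem measure_lt_sum_le_exp_of_sum_sq_atomSup_le {μ : Measure Ω} [IsProbabilityMeasure μ]
    {part : ℕ → ℕ → Set Ω} {d : ℕ → Ω → ℝ} (hP : IsRefiningPartitionSeq part)
    (hd_meas : ∀ k, Measurable (d k)) (hd_bdd : ∀ k, ∃ C : ℝ, ∀ x, |d k x| ≤ C)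
    (hd_adapted : ∀ k, IsAtomwiseConst part (k + 1) (d k))
    (hd_mart : ∀ k i, ∫ x in part k i, d k x ∂μ = 0) {n : ℕ} {t M : ℝ} (ht : 0 ≤ t) (hM : M ≠ 0)
    (hSq : ∀ᵐ x ∂μ, ∑ k ∈ range n, atomSup part k (d k) x ^ 2 ≤ M ^ 2) :
    μ {x | t < ∑ k ∈ range n, d k x} ≤ ENNReal.ofReal (exp (-(t ^ 2) / (2 * M ^ 2))) := by
  set L := t / M ^ 2
  set ε := exp (t ^ 2 / (2 * M ^ 2))
  have hL : 0 ≤ L := by positivity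
  have hsub : {x | t < ∑ k ∈ range n, d k x} ≤ᵐ[μ] {x | ε ≤ expProcess part d L n x} := by
    filter_upwards [hSq] with x hx hxt
    have h1 : L * t ≤ L * ∑ k ∈ range n, d k x := mul_le_mul_of_nonneg_left hxt.le hL
    have h2 : L ^ 2 / 2 * ∑ k ∈ range n, atomSup part k (d k) x ^ 2 ≤ L ^ 2 / 2 * M ^ 2 :=
      mul_le_mul_of_nonneg_left hx (by positivity)
    have h3 : L * t - L ^ 2 / 2 * M ^ 2 = t ^ 2 / (2 * M ^ 2) := by
      simp only [L]
      field_simp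
      ring
    have h4 : ∑ k ∈ range n, (L * d k x - L ^ 2 * atomSup part k (d k) x ^ 2 / 2) =
        L * ∑ k ∈ range n, d k x - L ^ 2 / 2 * ∑ k ∈ range n, atomSup part k (d k) x ^ 2 := by
      rw [sum_sub_distrib, mul_sum, mul_sum]
      ring_nf
    show ε ≤ expProcess part d L n x
    rw [expProcess, h4, exp_le_exp]
    linarith
  have hmarkov := mul_meas_ge_le_integral_of_nonneg (.of_forall fun x => (exp_pos _).le)
    (integrable_expProcess (μ := μ) (L := L) hP hd_meas hd_bdd n) ε
  have hreal : μ.real {x | ε ≤ expProcess part d L n x} ≤ exp (-(t ^ 2) / (2 * M ^ 2)) := by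
    rw [neg_div, exp_neg, inv_eq_one_div, le_div_iff₀' (exp_pos _)]
    exact (hmarkov.trans (integral_expProcess_le hP hd_meas hd_bdd hd_adapted hd_mart n)).trans_eq
      probReal_univ
  calc μ {x | t < ∑ k ∈ range n, d k x} ≤ μ {x | ε ≤ expProcess part d L n x} :=
        measure_mono_ae hsub
    _ = ENNReal.ofReal (μ.real {x | ε ≤ expProcess part d L n x}) := (ofReal_measureReal).symm
    _ ≤ ENNReal.ofReal (exp (-(t ^ 2) / (2 * M ^ 2))) := ENNReal.ofReal_le_ofReal hreal

end PartitionFiltration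

lemma forall_dite_lt {α : Type*} {n : ℕ} (p : ℕ → α → Prop) {f : Fin n → α} {z : α}
    (hf : ∀ k : Fin n, p k (f k)) (hz : ∀ k, p k z) :
    ∀ k, p k (if h : k < n then f ⟨k, h⟩ else z) := by
  intro k
  split_ifs with h
  exacts [hf ⟨k, h⟩, hz k]

theorem stmt_18_general
    {Ω : Type*} [MeasurableSpace Ω] (μ : Measure Ω) [IsProbabilityMeasure μ]
    (n : ℕ) (t : ℝ) (ht : 0 < t)
    (part : ℕ → ℕ → Set Ω)
    (hpart_meas : ∀ k i, MeasurableSet (part k i))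
    (hpart_disj : ∀ k, Pairwise fun i j => Disjoint (part k i) (part k j))
    (hpart_cover : ∀ k, (⋃ i, part k i) = Set.univ)
    (hpart_refine : ∀ k i, ∃ j, part (k + 1) i ⊆ part k j)
    (d : Fin n → Ω → ℝ)
    (hd_meas : ∀ k, Measurable (d k))
    (hd_bdd : ∀ k, ∃ C : ℝ, ∀ x, |d k x| ≤ C)
    (hd_adapted : ∀ (k : Fin n) (i : ℕ), ∀ x ∈ part (k.1 + 1) i, ∀ y ∈ part (k.1 + 1) i,
      d k x = d k y)
    (hd_mart : ∀ (k : Fin n) (i : ℕ), ∫ x in part k.1 i, d k x ∂μ = 0)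
    (M : ℝ) (hM : 0 < M)
    (hSq : ∀ᵐ x ∂μ, ∀ i : ℕ → ℕ, (∀ k : Fin n, x ∈ part k.1 (i k.1)) →
      ∑ k : Fin n, (sSup ((fun y => |d k y|) '' part k.1 (i k.1))) ^ 2 ≤ M ^ 2) :
    μ {x | t < ∑ k, d k x} ≤ ENNReal.ofReal (Real.exp (-(t ^ 2) / (2 * M ^ 2))) := by
  set e : ℕ → Ω → ℝ := fun k => if h : k < n then d ⟨k, h⟩ else 0
  have he (k : Fin n) : e k = d k := dif_pos k.isLt
  have hP : IsRefiningPartitionSeq part := ⟨hpart_meas, hpart_disj, hpart_cover, hpart_refine⟩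
  have hsum (x : Ω) : ∑ k, d k x = ∑ k ∈ range n, e k x := by
    simp only [← Fin.sum_univ_eq_sum_range, he]
  have hSq' : ∀ᵐ x ∂μ, ∑ k ∈ range n, atomSup part k (e k) x ^ 2 ≤ M ^ 2 := by
    filter_upwards [hSq] with x hx
    rw [← Fin.sum_univ_eq_sum_range (fun k => atomSup part k (e k) x ^ 2)]
    simp only [he]
    exact hx (atomIndex part · x) fun k => hP.mem_atomIndex k x
  simp only [hsum]
  exact measure_lt_sum_le_exp_of_sum_sq_atomSup_le hP
    (forall_dite_lt (fun _ (f : Ω → ℝ) => Measurable f) hd_meas fun _ => measurable_const)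
    (forall_dite_lt (fun _ (f : Ω → ℝ) => ∃ C : ℝ, ∀ x, |f x| ≤ C) hd_bdd fun _ => ⟨0, by simp⟩)
    (forall_dite_lt (fun k (f : Ω → ℝ) => IsAtomwiseConst part (k + 1) f) hd_adapted
      fun _ _ _ _ _ _ => rfl)
    (forall_dite_lt (fun k (f : Ω → ℝ) => ∀ i, ∫ x in part k i, f x ∂μ = 0) hd_mart
      fun _ _ => integral_zero _ _)
    ht.le hM.ne' hSq'

/-- Chang–Wilson–Wolff: for a discrete martingale `f_0, …, f_n` with bounded
differences `d_k = f_k - f_{k-1}` and square function a.e. bounded by `M`,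
`P(f_n - f_0 > t) ≤ exp(-t²/(2M²))` for every `t > 0`. -/
theorem stmt_18
    {Ω : Type*} [MeasurableSpace Ω] (μ : Measure Ω) [IsProbabilityMeasure μ]
    (n : ℕ) (hn : 0 < n) (t : ℝ) (ht : 0 < t)
    (part : ℕ → ℕ → Set Ω)
    (hpart_meas : ∀ k i, MeasurableSet (part k i))
    (hpart_disj : ∀ k, Pairwise fun i j => Disjoint (part k i) (part k j))
    (hpart_cover : ∀ k, (⋃ i, part k i) = Set.univ)
    (hpart_zero : part 0 0 = Set.univ)
    (hpart_refine : ∀ k i, ∃ j, part (k + 1) i ⊆ part k j)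
    (d : Fin n → Ω → ℝ)
    (hd_meas : ∀ k, Measurable (d k))
    (hd_bdd : ∀ k, ∃ C : ℝ, ∀ x, |d k x| ≤ C)
    (hd_adapted : ∀ (k : Fin n) (i : ℕ), ∀ x ∈ part (k.1 + 1) i, ∀ y ∈ part (k.1 + 1) i,
      d k x = d k y)
    (hd_mart : ∀ (k : Fin n) (i : ℕ), ∫ x in part k.1 i, d k x ∂μ = 0)
    (M : ℝ) (hM : 0 < M)
    (hSq : ∀ᵐ x ∂μ, ∀ i : ℕ → ℕ, (∀ k : Fin n, x ∈ part k.1 (i k.1)) →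
      ∑ k : Fin n, (sSup ((fun y => |d k y|) '' part k.1 (i k.1))) ^ 2 ≤ M ^ 2) :
    μ {x | t < ∑ k, d k x} ≤ ENNReal.ofReal (Real.exp (-(t ^ 2) / (2 * M ^ 2))) :=
  stmt_18_general μ n t ht part hpart_meas hpart_disj hpart_cover hpart_refine d hd_meas hd_bdd
    hd_adapted hd_mart M hM hSq
end
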